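/- arXiv:2211.12841 — 15 statements merged into one kernel-verified Lean document; each statement's English description precedes it below -/
import Mathlib

section
/- For every integer t ≥ 0, the matrix B_t equals the t-th Chebyshev polynomial of the first kind evaluated at B_1; that is, B_t = T_t(B_1). -/
open Matrix Polynomial

theorem stmt_0 (k m n : ℕ) (hk : 0 < k) (hm : 0 < m) (hn : 0 < n)
    (V : Matrix (Fin k) (Fin m) ℂ) (W : Matrix (Fin k) (Fin n) ℂ)
    (hV : Vᴴ * V = 1) (hW : Wᴴ * W = 1)
    (U : Matrix (Fin k) (Fin k) ℂ)
    (hU : U = (2 • (W * Wᴴ) - 1) * (2 • (V * Vᴴ) - 1))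
    (B : ℕ → Matrix (Fin m) (Fin m) ℂ)
    (hB : ∀ t : ℕ, B t = Vᴴ * U ^ t * V)
    (t : ℕ) :
    B t = Polynomial.aeval (B 1) (Polynomial.Chebyshev.T ℂ t) := by
  set R1 : Matrix (Fin k) (Fin k) ℂ := 2 • (V * Vᴴ) - 1 with hR1def
  set R2 : Matrix (Fin k) (Fin k) ℂ := 2 • (W * Wᴴ) - 1 with hR2def
  have hP : (V * Vᴴ) * (V * Vᴴ) = V * Vᴴ := by
    calc (V * Vᴴ) * (V * Vᴴ) = V * (Vᴴ * V) * Vᴴ := by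
          simp [Matrix.mul_assoc]
      _ = V * Vᴴ := by rw [hV, Matrix.mul_one]
  have hQ : (W * Wᴴ) * (W * Wᴴ) = W * Wᴴ := by
    calc (W * Wᴴ) * (W * Wᴴ) = W * (Wᴴ * W) * Wᴴ := by
          simp [Matrix.mul_assoc]
      _ = W * Wᴴ := by rw [hW, Matrix.mul_one]
  have hR1' : R1 = (V * Vᴴ) + (V * Vᴴ) - 1 := by rw [hR1def, two_smul]
  have hR2' : R2 = (W * Wᴴ) + (W * Wᴴ) - 1 := by rw [hR2def, two_smul]
  have hR1sq : R1 * R1 = 1 := by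
    simp only [hR1', Matrix.sub_mul, Matrix.add_mul, Matrix.mul_sub, Matrix.mul_add,
      hP, Matrix.mul_one, Matrix.one_mul]
    abel
  have hR2sq : R2 * R2 = 1 := by
    simp only [hR2', Matrix.sub_mul, Matrix.add_mul, Matrix.mul_sub, Matrix.mul_add,
      hQ, Matrix.mul_one, Matrix.one_mul]
    abel
  have key : Vᴴ * (V * Vᴴ) = Vᴴ := by rw [← Matrix.mul_assoc, hV, Matrix.one_mul]
  have key2 : (V * Vᴴ) * V = V := by rw [Matrix.mul_assoc, hV, Matrix.mul_one]
  have hVR1 : Vᴴ * R1 = Vᴴ := by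
    rw [hR1', Matrix.mul_sub, Matrix.mul_add, key, Matrix.mul_one]
    abel
  have hR1V : R1 * V = V := by
    rw [hR1', Matrix.sub_mul, Matrix.add_mul, key2, Matrix.one_mul]
    abel
  have hUR1 : U * R1 = R2 := by
    rw [hU, Matrix.mul_assoc, hR1sq, Matrix.mul_one]
  have hR2U : R2 * U = R1 := by
    rw [hU, ← Matrix.mul_assoc, hR2sq, Matrix.one_mul]
  have hrec : ∀ s : ℕ, B s + B (s + 2) = 2 • (B 1 * B (s + 1)) := by
    intro s
    have h2P : (2 : ℕ) • (V * Vᴴ) = R1 + 1 := by rw [hR1def]; abel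
    have e1 : U * (R1 * (U ^ (s + 1) * V)) = R2 * (U ^ (s + 1) * V) := by
      rw [← Matrix.mul_assoc, hUR1]
    have e2 : R2 * (U ^ (s + 1) * V) = R1 * (U ^ s * V) := by
      rw [pow_succ', Matrix.mul_assoc, ← Matrix.mul_assoc, hR2U]
    have e3 : Vᴴ * (R1 * (U ^ s * V)) = Vᴴ * (U ^ s * V) := by
      rw [← Matrix.mul_assoc, hVR1]
    calc B s + B (s + 2)
        = Vᴴ * U * (R1 * (U ^ (s + 1) * V))
            + Vᴴ * U * ((1 : Matrix (Fin k) (Fin k) ℂ) * (U ^ (s + 1) * V)) := by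
          rw [hB s, hB (s + 2)]
          congr 1
          · calc Vᴴ * U ^ s * V = Vᴴ * (U ^ s * V) := by rw [Matrix.mul_assoc]
              _ = Vᴴ * (R1 * (U ^ s * V)) := e3.symm
              _ = Vᴴ * (R2 * (U ^ (s + 1) * V)) := by rw [e2]
              _ = Vᴴ * (U * (R1 * (U ^ (s + 1) * V))) := by rw [e1]
              _ = Vᴴ * U * (R1 * (U ^ (s + 1) * V)) := by rw [Matrix.mul_assoc]
          · rw [Matrix.one_mul, show s + 2 = (s + 1) + 1 from rfl, pow_succ']
            simp [Matrix.mul_assoc]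
      _ = Vᴴ * U * ((R1 + 1) * (U ^ (s + 1) * V)) := by
          rw [Matrix.add_mul, Matrix.mul_add]
      _ = Vᴴ * U * ((2 • (V * Vᴴ)) * (U ^ (s + 1) * V)) := by rw [h2P]
      _ = 2 • (B 1 * B (s + 1)) := by
          rw [hB 1, hB (s + 1), pow_one]
          rw [Matrix.smul_mul, Matrix.mul_smul]
          congr 1
          simp [Matrix.mul_assoc]
  suffices h : ∀ s : ℕ, B s = Polynomial.aeval (B 1) (Polynomial.Chebyshev.T ℂ s) ∧
      B (s + 1) = Polynomial.aeval (B 1) (Polynomial.Chebyshev.T ℂ (s + 1)) from (h t).1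
  intro s
  induction s with
  | zero =>
    constructor
    · rw [hB 0]
      norm_num [Polynomial.Chebyshev.T_zero]
      exact hV
    · norm_num [Polynomial.Chebyshev.T_one]
  | succ s ih =>
    refine ⟨ih.2, ?_⟩
    have hT : Polynomial.Chebyshev.T ℂ ((s : ℤ) + 1 + 1)
        = 2 * X * Polynomial.Chebyshev.T ℂ ((s : ℤ) + 1) - Polynomial.Chebyshev.T ℂ s := by
      have := Polynomial.Chebyshev.T_add_two ℂ (s : ℤ)
      convert this using 2 <;> ring
    have ih2 := ih.2
    push_cast at ih2 ⊢
    rw [hT, map_sub, _root_.map_mul, _root_.map_mul, aeval_X, map_ofNat, ← ih.1, ← ih2]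
    have h2 : (2 : Matrix (Fin m) (Fin m) ℂ) * (B 1 * B (s + 1)) = 2 • (B 1 * B (s + 1)) := by
      rw [two_smul, two_mul]
    rw [mul_assoc, h2]
    exact eq_sub_of_add_eq' (hrec s)
end

section
/- For every integer t ≥ 1 the matrices B_t satisfy the Chebyshev three-term recurrence B_{t+1} = 2·B_t·B_1 − B_{t−1}. -/
open Matrix

theorem stmt_1 (k m n : ℕ) (hk : 0 < k) (hm : 0 < m) (hn : 0 < n)
    (V : Matrix (Fin k) (Fin m) ℂ) (W : Matrix (Fin k) (Fin n) ℂ)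
    (hV : Vᴴ * V = 1) (hW : Wᴴ * W = 1)
    (U : Matrix (Fin k) (Fin k) ℂ)
    (hU : U = (2 • (W * Wᴴ) - 1) * (2 • (V * Vᴴ) - 1))
    (B : ℕ → Matrix (Fin m) (Fin m) ℂ)
    (hB : ∀ t : ℕ, B t = Vᴴ * U ^ t * V)
    (t : ℕ) (ht : 1 ≤ t) :
    B (t + 1) = 2 • (B t * B 1) - B (t - 1) := by
  obtain ⟨s, rfl⟩ : ∃ s, t = s + 1 := ⟨t - 1, (Nat.succ_pred_eq_of_pos ht).symm⟩
  obtain ⟨RV, hRVdef⟩ : ∃ X : Matrix (Fin k) (Fin k) ℂ, X = 2 • (V * Vᴴ) - 1 := ⟨_, rfl⟩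
  obtain ⟨RW, hRWdef⟩ : ∃ X : Matrix (Fin k) (Fin k) ℂ, X = 2 • (W * Wᴴ) - 1 := ⟨_, rfl⟩
  rw [← hRVdef, ← hRWdef] at hU
  have hP : (V * Vᴴ) * (V * Vᴴ) = V * Vᴴ := by
    rw [Matrix.mul_assoc, ← Matrix.mul_assoc Vᴴ, hV, Matrix.one_mul]
  have hQ : (W * Wᴴ) * (W * Wᴴ) = W * Wᴴ := by
    rw [Matrix.mul_assoc, ← Matrix.mul_assoc Wᴴ, hW, Matrix.one_mul]
  have hRV2 : RV * RV = 1 := by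
    rw [hRVdef]
    simp only [sub_mul, mul_sub, one_mul, mul_one, smul_mul_assoc, mul_smul_comm, hP]
    abel
  have hRW2 : RW * RW = 1 := by
    rw [hRWdef]
    simp only [sub_mul, mul_sub, one_mul, mul_one, smul_mul_assoc, mul_smul_comm, hQ]
    abel
  have hRVV : RV * V = V := by
    rw [hRVdef, Matrix.sub_mul, Matrix.smul_mul, Matrix.mul_assoc, hV, Matrix.mul_one,
      Matrix.one_mul, two_smul]
    abel
  have h1 : ∀ X : Matrix (Fin k) (Fin m) ℂ, U * X = RW * (RV * X) := by
    intro X; rw [hU, Matrix.mul_assoc]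
  have h2' : ∀ Y : Matrix (Fin m) (Fin m) ℂ, RV * (V * Y) = V * Y := by
    intro Y; rw [← Matrix.mul_assoc, hRVV]
  have h4 : ∀ X : Matrix (Fin k) (Fin m) ℂ, RW * (RW * X) = X := by
    intro X; rw [← Matrix.mul_assoc, hRW2, Matrix.one_mul]
  have hRVadd : RV + 1 = 2 • (V * Vᴴ) := by rw [hRVdef]; abel
  simp only [hB, Nat.add_sub_cancel, pow_succ, pow_zero, Matrix.one_mul, Matrix.mul_assoc]
  simp only [h1, hRVV, h2']
  have hmain : (2 : ℕ) • (Vᴴ * (U ^ s * (RW * (V * (Vᴴ * (RW * V)))))) =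
      Vᴴ * (U ^ s * (RW * (RV * (RW * V)))) + Vᴴ * (U ^ s * V) := by
    rw [← Matrix.mul_smul, ← Matrix.mul_smul, ← Matrix.mul_smul]
    have inner : (2 : ℕ) • (V * (Vᴴ * (RW * V))) = RV * (RW * V) + RW * V := by
      rw [← Matrix.mul_assoc, ← Matrix.smul_mul, ← hRVadd, Matrix.add_mul, Matrix.one_mul]
    rw [inner]
    simp only [Matrix.mul_add, Matrix.add_mul, h4]
  rw [hmain]
  abel
end

section
/- Suppose U^τ (V e_u) = V e_v for some integer τ ≥ 1 and indices u, v, and let d ≥ 1 be a divisor of τ. Then u and v are strongly cospectral with respect to the Hermitian matrix B_d: for every real number σ, if F_σ denotes the orthogonal projection of ℂ^m onto the eigenspace ker(B_d − σ·I), then F_σ e_v = F_σ e_u or F_σ e_v = − F_σ e_u. -/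
open Matrix

private def chebAux (s : ℂ) : ℕ → ℂ
  | 0 => 1
  | 1 => s
  | (n+2) => s * chebAux s (n+1) + s * chebAux s (n+1) - chebAux s n

theorem stmt_3 (k m n : ℕ) (hk : 0 < k) (hm : 0 < m) (hn : 0 < n)
    (V : Matrix (Fin k) (Fin m) ℂ) (W : Matrix (Fin k) (Fin n) ℂ)
    (hV : Vᴴ * V = 1) (hW : Wᴴ * W = 1)
    (U : Matrix (Fin k) (Fin k) ℂ)
    (hU : U = (2 • (W * Wᴴ) - 1) * (2 • (V * Vᴴ) - 1))
    (B : ℕ → Matrix (Fin m) (Fin m) ℂ)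
    (hB : ∀ t : ℕ, B t = Vᴴ * U ^ t * V)
    (τ : ℕ) (hτ : 1 ≤ τ) (u v : Fin m)
    (hPST : (U ^ τ) *ᵥ (V *ᵥ Pi.single u 1) = V *ᵥ Pi.single v 1)
    (d : ℕ) (hd : 1 ≤ d) (hdvd : d ∣ τ)
    (σ : ℝ) (F : Matrix (Fin m) (Fin m) ℂ)
    (hFproj : F * F = F) (hFherm : Fᴴ = F)
    (hFrange : ∀ x : Fin m → ℂ, F *ᵥ x = x ↔ B d *ᵥ x = (σ : ℂ) • x) :
    F *ᵥ Pi.single v 1 = F *ᵥ Pi.single u 1 ∨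
      F *ᵥ Pi.single v 1 = -(F *ᵥ Pi.single u 1) := by
  set P : Matrix (Fin k) (Fin k) ℂ := V * Vᴴ with hPdef
  set RV : Matrix (Fin k) (Fin k) ℂ := 2 • P - 1 with hRVdef
  set RW : Matrix (Fin k) (Fin k) ℂ := 2 • (W * Wᴴ) - 1 with hRWdef
  have hPP : P * P = P := by
    rw [hPdef, Matrix.mul_assoc, ← Matrix.mul_assoc Vᴴ, hV, Matrix.one_mul]
  have hRVV : RV * V = V := by
    rw [hRVdef, Matrix.sub_mul, Matrix.one_mul, two_smul, Matrix.add_mul, hPdef,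
      Matrix.mul_assoc, hV, Matrix.mul_one]
    abel
  have hVRV : Vᴴ * RV = Vᴴ := by
    rw [hRVdef, Matrix.mul_sub, Matrix.mul_one, two_smul, Matrix.mul_add, hPdef,
      ← Matrix.mul_assoc, hV, Matrix.one_mul]
    abel
  have hRV2 : RV * RV = 1 := by
    rw [hRVdef, two_smul]
    simp only [Matrix.add_mul, Matrix.sub_mul, Matrix.mul_add, Matrix.mul_sub,
      Matrix.mul_one, Matrix.one_mul, hPP]
    abel
  have hQQ : (W * Wᴴ) * (W * Wᴴ) = W * Wᴴ := by
    rw [Matrix.mul_assoc, ← Matrix.mul_assoc Wᴴ, hW, Matrix.one_mul]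
  have hRW2 : RW * RW = 1 := by
    rw [hRWdef, two_smul]
    simp only [Matrix.add_mul, Matrix.sub_mul, Matrix.mul_add, Matrix.mul_sub,
      Matrix.mul_one, Matrix.one_mul, hQQ]
    abel
  set Ui : Matrix (Fin k) (Fin k) ℂ := RV * RW with hUidef
  have hUUi : U * Ui = 1 := by
    rw [hU, hUidef, Matrix.mul_assoc, ← Matrix.mul_assoc RV RV RW, hRV2,
      Matrix.one_mul, hRW2]
  have hUiU : Ui * U = 1 := by
    rw [hU, hUidef, Matrix.mul_assoc, ← Matrix.mul_assoc RW RW RV, hRW2,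
      Matrix.one_mul, hRV2]
  have hpowUUi : ∀ b : ℕ, U ^ b * Ui ^ b = 1 := by
    intro b
    induction b with
    | zero => simp
    | succ b ih =>
      rw [pow_succ' U, pow_succ Ui, Matrix.mul_assoc, ← Matrix.mul_assoc (U ^ b),
        ih, Matrix.one_mul, hUUi]
  have hRVU : RV * U = Ui * RV := by
    rw [hU, hUidef, ← Matrix.mul_assoc]
  have hRVUb : ∀ b : ℕ, RV * U ^ b = Ui ^ b * RV := by
    intro b
    induction b with
    | zero => simp
    | succ b ih =>
      rw [pow_succ, pow_succ, ← Matrix.mul_assoc, ih, Matrix.mul_assoc,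
        hRVU, ← Matrix.mul_assoc]
  have hsand : ∀ b : ℕ, U ^ b * RV * U ^ b = RV := by
    intro b
    rw [Matrix.mul_assoc, hRVUb, ← Matrix.mul_assoc, hpowUUi, Matrix.one_mul]
  -- B is Hermitian
  have hRVH : RVᴴ = RV := by
    rw [hRVdef, two_smul]
    simp [conjTranspose_sub, conjTranspose_add, conjTranspose_mul, hPdef]
  have hRWH : RWᴴ = RW := by
    rw [hRWdef, two_smul]
    simp [conjTranspose_sub, conjTranspose_add, conjTranspose_mul]
  have hUH : Uᴴ = Ui := by
    rw [hU, conjTranspose_mul, hRVH, hRWH, hUidef]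
  have hUiconj : ∀ t : ℕ, Ui ^ t = RV * U ^ t * RV := by
    intro t
    rw [hRVUb, Matrix.mul_assoc, hRV2, Matrix.mul_one]
  have hBherm : ∀ t : ℕ, (B t)ᴴ = B t := by
    intro t
    rw [hB, conjTranspose_mul, conjTranspose_mul, conjTranspose_conjTranspose,
      conjTranspose_pow, hUH, hUiconj, Matrix.mul_assoc, Matrix.mul_assoc, hRVV,
      ← Matrix.mul_assoc Vᴴ RV, hVRV, Matrix.mul_assoc]
  -- key product rule
  have hkey : ∀ a b : ℕ, B (a + b) * B b + B (a + b) * B b = B a + B (a + 2 * b) := by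
    intro a b
    have expand : B (a + b) * B b = Vᴴ * U ^ (a + b) * P * U ^ b * V := by
      rw [hB, hB, hPdef]
      simp only [Matrix.mul_assoc]
    rw [expand]
    have h2P : Vᴴ * U ^ (a + b) * P * U ^ b * V + Vᴴ * U ^ (a + b) * P * U ^ b * V
        = Vᴴ * U ^ (a + b) * (RV + 1) * U ^ b * V := by
      have : RV + 1 = P + P := by rw [hRVdef, two_smul]; abel
      rw [this]
      simp only [Matrix.mul_add, Matrix.add_mul]
    rw [h2P]
    have hsplit : Vᴴ * U ^ (a + b) * (RV + 1) * U ^ b * V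
        = Vᴴ * U ^ (a + b) * RV * U ^ b * V + Vᴴ * U ^ (a + b) * U ^ b * V := by
      simp only [Matrix.mul_add, Matrix.add_mul, Matrix.mul_one, Matrix.one_mul]
    rw [hsplit]
    congr 1
    · -- = B a
      rw [hB]
      have : U ^ (a + b) * RV * U ^ b = U ^ a * RV := by
        rw [pow_add, Matrix.mul_assoc (U ^ a), Matrix.mul_assoc (U ^ a), hsand]
      calc Vᴴ * U ^ (a + b) * RV * U ^ b * V
          = Vᴴ * (U ^ (a + b) * RV * U ^ b) * V := by simp only [Matrix.mul_assoc]
        _ = Vᴴ * (U ^ a * RV) * V := by rw [this]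
        _ = Vᴴ * U ^ a * (RV * V) := by simp only [Matrix.mul_assoc]
        _ = Vᴴ * U ^ a * V := by rw [hRVV]
    · rw [hB]
      have : a + 2 * b = (a + b) + b := by ring
      rw [this, pow_add U (a + b) b]
      simp only [Matrix.mul_assoc]
  have hB0 : B 0 = 1 := by simp [hB, hV]
  -- B d * F = σ • F
  have hBdF : B d * F = (σ : ℂ) • F := by
    ext i j
    have h1 : F *ᵥ (F *ᵥ Pi.single j 1) = F *ᵥ Pi.single j 1 := by
      rw [Matrix.mulVec_mulVec, hFproj]
    have h2 := (hFrange _).mp h1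
    calc (B d * F) i j = ((B d * F) *ᵥ Pi.single j 1) i := by
          simp [Matrix.mulVec_single]
      _ = (B d *ᵥ (F *ᵥ Pi.single j 1)) i := by rw [Matrix.mulVec_mulVec]
      _ = ((σ : ℂ) • (F *ᵥ Pi.single j 1)) i := by rw [h2]
      _ = (σ : ℂ) * (F *ᵥ Pi.single j 1) i := rfl
      _ = ((σ : ℂ) • F) i j := by simp [Matrix.mulVec_single]
  have hFBd : F * B d = (σ : ℂ) • F := by
    have hc := congrArg conjTranspose hBdF
    rwa [conjTranspose_mul, hFherm, hBherm, conjTranspose_smul, Complex.star_def,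
      Complex.conj_ofReal, hFherm] at hc
  -- main recurrence
  have hrec : ∀ j : ℕ, F * B (j * d) = chebAux (σ : ℂ) j • F ∧
      F * B ((j + 1) * d) = chebAux (σ : ℂ) (j + 1) • F := by
    intro j
    induction j with
    | zero =>
      constructor
      · rw [Nat.zero_mul, hB0, Matrix.mul_one]
        simp [chebAux]
      · rw [Nat.one_mul, hFBd]
        simp [chebAux]
    | succ j ih =>
      refine ⟨ih.2, ?_⟩
      have e2 : (j + 1 + 1) * d = j * d + 2 * d := by ring
      have e1 : (j + 1) * d = j * d + d := by ring
      have hk2 := hkey (j * d) d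
      have hB2 : B (j * d + 2 * d) = B (j * d + d) * B d + B (j * d + d) * B d - B (j * d) := by
        rw [hk2]; abel
      rw [e2, hB2]
      rw [Matrix.mul_sub, Matrix.mul_add, ← Matrix.mul_assoc, ← e1, ih.2, ih.1]
      rw [Matrix.smul_mul, hFBd, smul_smul, ← add_smul, ← sub_smul]
      congr 1
      simp only [chebAux]
      ring
  -- B τ moves u to v and v to u
  have hv : B τ *ᵥ Pi.single u 1 = Pi.single v 1 := by
    rw [hB, ← Matrix.mulVec_mulVec, ← Matrix.mulVec_mulVec, hPST, Matrix.mulVec_mulVec,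
      hV, Matrix.one_mulVec]
  have hu : B τ *ᵥ Pi.single v 1 = Pi.single u 1 := by
    have h2τ : B (0 + 2 * τ) *ᵥ Pi.single u 1 = B τ *ᵥ Pi.single v 1 := by
      rw [hB, hB]
      rw [show 0 + 2 * τ = τ + τ from by ring, pow_add]
      rw [← Matrix.mulVec_mulVec, ← Matrix.mulVec_mulVec, ← Matrix.mulVec_mulVec,
        ← Matrix.mulVec_mulVec, hPST, ← Matrix.mulVec_mulVec]
    have hk0 := hkey 0 τ
    rw [Nat.zero_add, hB0] at hk0
    have happ := congrArg (fun M => M *ᵥ Pi.single u 1) hk0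
    simp only [Matrix.add_mulVec, Matrix.one_mulVec, ← Matrix.mulVec_mulVec, hv] at happ
    rw [Nat.zero_add] at h2τ
    rw [Nat.zero_add] at happ
    rw [h2τ] at happ
    -- happ : Bτ *ᵥ e_v + Bτ *ᵥ e_v = e_u + Bτ *ᵥ e_v
    have := add_right_cancel happ
    exact this
  -- conclude
  obtain ⟨q, hq⟩ := hdvd
  set c : ℂ := chebAux (σ : ℂ) q with hcdef
  have hFBτ : F * B τ = c • F := by
    rw [show τ = q * d from by rw [hq, Nat.mul_comm], hcdef]
    exact (hrec q).1
  have hFv : F *ᵥ Pi.single v 1 = c • (F *ᵥ Pi.single u 1) := by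
    rw [← hv, Matrix.mulVec_mulVec, hFBτ, Matrix.smul_mulVec]
  have hFu : F *ᵥ Pi.single u 1 = c • (F *ᵥ Pi.single v 1) := by
    rw [← hu, Matrix.mulVec_mulVec, hFBτ, Matrix.smul_mulVec]
  by_cases hc : c * c = 1
  · rcases mul_self_eq_one_iff.mp hc with h1 | h1
    · left; rw [hFv, h1, one_smul]
    · right; rw [hFv, h1, neg_one_smul]
  · have hself : F *ᵥ Pi.single v 1 = (c * c) • (F *ᵥ Pi.single v 1) := by
      conv_lhs => rw [hFv, hFu]
      rw [smul_smul]
    have hz : F *ᵥ Pi.single v 1 = 0 := by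
      have h0 : (1 - c * c) • (F *ᵥ Pi.single v 1) = 0 := by
        rw [sub_smul, one_smul, ← hself, sub_self]
      rcases smul_eq_zero.mp h0 with h | h
      · exact absurd (by linear_combination -h) hc
      · exact h
    left
    rw [hz, hFu, hz, smul_zero]
end

section
/- If U^τ (V e_u) = V e_v for some integer τ ≥ 1 and indices u, v, then also U^τ (V e_v) = V e_u; consequently U^{2τ} (V e_u) = V e_u and U^{2τ} (V e_v) = V e_v. -/
/-!
With `R = 2VVᴴ - 1` and `S = 2WWᴴ - 1`, both involutions, `U = SR` satisfies `RUR = RS = U⁻¹`,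
so `Uᵗ R Uᵗ = R` for every `t`. Since `R` fixes the range of `V`, applying `Uᵗ R` to
`Uᵗ (V e_u) = V e_v` gives `Uᵗ (V e_v) = R (V e_u) = V e_u`.
-/

open Matrix

theorem IsIdempotentElem.two_nsmul_sub_one_mul_self {R : Type*} [Ring R] {p : R}
    (hp : IsIdempotentElem p) : (2 • p - 1) * (2 • p - 1) = 1 := by
  have expand : (2 • p - 1) * (2 • p - 1) = 4 • (p * p) - 4 • p + 1 := by noncomm_ring
  rw [expand, hp.eq, sub_self, zero_add]

theorem pow_mul_mul_pow_of_mul_self_eq_one {M : Type*} [Monoid M] {r s : M}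
    (hr : r * r = 1) (hs : s * s = 1) (t : ℕ) : (s * r) ^ t * r * (s * r) ^ t = r := by
  induction t with
  | zero => simp
  | succ t ih =>
    calc (s * r) ^ (t + 1) * r * (s * r) ^ (t + 1)
        = (s * r) ^ t * (s * r) * r * (s * r * (s * r) ^ t) := by rw [← pow_succ, ← pow_succ']
      _ = (s * r) ^ t * (s * (r * r) * s * r) * (s * r) ^ t := by simp only [mul_assoc]
      _ = r := by rw [hr, mul_one, hs, one_mul, ih]

section Isometry

variable {k m 𝕜 : Type*} [Fintype k] [Fintype m] [DecidableEq m]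
  [Ring 𝕜] [StarRing 𝕜] {V : Matrix k m 𝕜}

theorem Matrix.isIdempotentElem_mul_conjTranspose (hV : Vᴴ * V = 1) :
    IsIdempotentElem (V * Vᴴ) := by
  rw [IsIdempotentElem, Matrix.mul_assoc, ← Matrix.mul_assoc Vᴴ, hV, Matrix.one_mul]

theorem Matrix.two_nsmul_mul_conjTranspose_sub_one_mul [DecidableEq k] (hV : Vᴴ * V = 1) :
    (2 • (V * Vᴴ) - 1) * V = V := by
  rw [Matrix.sub_mul, Matrix.one_mul, Matrix.smul_mul, Matrix.mul_assoc, hV, Matrix.mul_one,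
    two_smul, add_sub_cancel_right]

end Isometry

theorem stmt_4_general (k m n : ℕ)
    (V : Matrix (Fin k) (Fin m) ℂ) (W : Matrix (Fin k) (Fin n) ℂ)
    (hV : Vᴴ * V = 1) (hW : Wᴴ * W = 1)
    (U : Matrix (Fin k) (Fin k) ℂ)
    (hU : U = (2 • (W * Wᴴ) - 1) * (2 • (V * Vᴴ) - 1))
    (τ : ℕ) (u v : Fin m)
    (hPST : (U ^ τ) *ᵥ (V *ᵥ Pi.single u 1) = V *ᵥ Pi.single v 1) :
    (U ^ τ) *ᵥ (V *ᵥ Pi.single v 1) = V *ᵥ Pi.single u 1 ∧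
    (U ^ (2 * τ)) *ᵥ (V *ᵥ Pi.single u 1) = V *ᵥ Pi.single u 1 ∧
    (U ^ (2 * τ)) *ᵥ (V *ᵥ Pi.single v 1) = V *ᵥ Pi.single v 1 := by
  set R := 2 • (V * Vᴴ) - 1
  have hR_fix (x : Fin m → ℂ) : R *ᵥ (V *ᵥ x) = V *ᵥ x := by
    rw [mulVec_mulVec, two_nsmul_mul_conjTranspose_sub_one_mul hV]
  have hURU : U ^ τ * R * U ^ τ = R := by
    rw [hU]
    exact pow_mul_mul_pow_of_mul_self_eq_one
      (isIdempotentElem_mul_conjTranspose hV).two_nsmul_sub_one_mul_self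
      (isIdempotentElem_mul_conjTranspose hW).two_nsmul_sub_one_mul_self τ
  have hvu : (U ^ τ) *ᵥ (V *ᵥ Pi.single v 1) = V *ᵥ Pi.single u 1 := by
    calc (U ^ τ) *ᵥ (V *ᵥ Pi.single v 1)
        = (U ^ τ * R * U ^ τ) *ᵥ (V *ᵥ Pi.single u 1) := by
          rw [← mulVec_mulVec, ← mulVec_mulVec, hPST, hR_fix]
      _ = V *ᵥ Pi.single u 1 := by rw [hURU, hR_fix]
  refine ⟨hvu, ?_, ?_⟩
  · rw [two_mul, pow_add, ← mulVec_mulVec, hPST, hvu]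
  · rw [two_mul, pow_add, ← mulVec_mulVec, hvu, hPST]

theorem stmt_4 (k m n : ℕ) (hk : 0 < k) (hm : 0 < m) (hn : 0 < n)
    (V : Matrix (Fin k) (Fin m) ℂ) (W : Matrix (Fin k) (Fin n) ℂ)
    (hV : Vᴴ * V = 1) (hW : Wᴴ * W = 1)
    (U : Matrix (Fin k) (Fin k) ℂ)
    (hU : U = (2 • (W * Wᴴ) - 1) * (2 • (V * Vᴴ) - 1))
    (τ : ℕ) (hτ : 1 ≤ τ) (u v : Fin m)
    (hPST : (U ^ τ) *ᵥ (V *ᵥ Pi.single u 1) = V *ᵥ Pi.single v 1) :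
    (U ^ τ) *ᵥ (V *ᵥ Pi.single v 1) = V *ᵥ Pi.single u 1 ∧
    (U ^ (2 * τ)) *ᵥ (V *ᵥ Pi.single u 1) = V *ᵥ Pi.single u 1 ∧
    (U ^ (2 * τ)) *ᵥ (V *ᵥ Pi.single v 1) = V *ᵥ Pi.single v 1 :=
  stmt_4_general k m n V W hV hW U hU τ u v hPST
end

section
/- Let u, v, w be pairwise distinct indices in {1,…,m}. If U^τ (V e_u) = V e_v for some integer τ ≥ 1, then there is no integer t ≥ 1 with U^t (V e_u) = V e_w; that is, perfect state transfer from u can occur to at most one other index. -/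
open Matrix

private lemma fix_pow {k : ℕ} (M : Matrix (Fin k) (Fin k) ℂ) (x : Fin k → ℂ)
    (h : M *ᵥ x = x) (c : ℕ) : M ^ c *ᵥ x = x := by
  induction c with
  | zero => simp
  | succ c ih => rw [pow_succ', ← Matrix.mulVec_mulVec, ih, h]

private lemma fix_zpow {k : ℕ} (M : (Matrix (Fin k) (Fin k) ℂ)ˣ) (x : Fin k → ℂ)
    (h : (M : Matrix (Fin k) (Fin k) ℂ) *ᵥ x = x) (z : ℤ) :
    ((M ^ z : (Matrix (Fin k) (Fin k) ℂ)ˣ) : Matrix (Fin k) (Fin k) ℂ) *ᵥ x = x := by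
  have hinv : ((M⁻¹ : (Matrix (Fin k) (Fin k) ℂ)ˣ) : Matrix (Fin k) (Fin k) ℂ) *ᵥ x = x := by
    conv_lhs => rw [← h]
    rw [Matrix.mulVec_mulVec, ← Units.val_mul, inv_mul_cancel, Units.val_one, Matrix.one_mulVec]
  cases z with
  | ofNat c =>
      rw [Int.ofNat_eq_coe, zpow_natCast, Units.val_pow_eq_pow_val]
      exact fix_pow _ x h c
  | negSucc c =>
      rw [zpow_negSucc, ← inv_pow, Units.val_pow_eq_pow_val]
      exact fix_pow _ x hinv (c + 1)

theorem stmt_5 (k m n : ℕ) (hk : 0 < k) (hm : 0 < m) (hn : 0 < n)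
    (V : Matrix (Fin k) (Fin m) ℂ) (W : Matrix (Fin k) (Fin n) ℂ)
    (hV : Vᴴ * V = 1) (hW : Wᴴ * W = 1)
    (U : Matrix (Fin k) (Fin k) ℂ)
    (hU : U = (2 • (W * Wᴴ) - 1) * (2 • (V * Vᴴ) - 1))
    (u v w : Fin m) (huv : u ≠ v) (huw : u ≠ w) (hvw : v ≠ w)
    (τ : ℕ) (hτ : 1 ≤ τ)
    (hPST : (U ^ τ) *ᵥ (V *ᵥ Pi.single u 1) = V *ᵥ Pi.single v 1) :
    ∀ t : ℕ, 1 ≤ t → (U ^ t) *ᵥ (V *ᵥ Pi.single u 1) ≠ V *ᵥ Pi.single w 1 := by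
  intro t ht hPSTw
  set R : Matrix (Fin k) (Fin k) ℂ := 2 • (V * Vᴴ) - 1 with hRdef
  set S : Matrix (Fin k) (Fin k) ℂ := 2 • (W * Wᴴ) - 1 with hSdef
  -- injectivity of j ↦ V eⱼ
  have colinj : ∀ a b : Fin m, V *ᵥ Pi.single a 1 = V *ᵥ Pi.single b 1 → a = b := by
    intro a b hab
    have h2 : Vᴴ *ᵥ (V *ᵥ Pi.single a 1) = Vᴴ *ᵥ (V *ᵥ Pi.single b 1) := by rw [hab]
    rw [Matrix.mulVec_mulVec, Matrix.mulVec_mulVec, hV, Matrix.one_mulVec,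
      Matrix.one_mulVec] at h2
    by_contra hne
    have := congrFun h2 a
    rw [Pi.single_eq_same, Pi.single_eq_of_ne hne] at this
    exact one_ne_zero this
  -- R² = 1 and S² = 1
  have hR2 : R * R = 1 := by
    have hP : (V * Vᴴ) * (V * Vᴴ) = V * Vᴴ := by
      rw [Matrix.mul_assoc, ← Matrix.mul_assoc Vᴴ, hV, Matrix.one_mul]
    have expand : R * R = 4 • ((V * Vᴴ) * (V * Vᴴ)) - 4 • (V * Vᴴ) + 1 := by
      rw [hRdef]; noncomm_ring
    rw [expand, hP, sub_self, zero_add]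
  have hS2 : S * S = 1 := by
    have hP : (W * Wᴴ) * (W * Wᴴ) = W * Wᴴ := by
      rw [Matrix.mul_assoc, ← Matrix.mul_assoc Wᴴ, hW, Matrix.one_mul]
    have expand : S * S = 4 • ((W * Wᴴ) * (W * Wᴴ)) - 4 • (W * Wᴴ) + 1 := by
      rw [hSdef]; noncomm_ring
    rw [expand, hP, sub_self, zero_add]
  have hU' : U = S * R := hU
  -- U is invertible with inverse R*S
  have hURS : U * (R * S) = 1 := by
    rw [hU', Matrix.mul_assoc, ← Matrix.mul_assoc R R S, hR2, Matrix.one_mul, hS2]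
  have hRSU : (R * S) * U = 1 := by
    rw [hU', Matrix.mul_assoc, ← Matrix.mul_assoc S S R, hS2, Matrix.one_mul, hR2]
  -- R fixes the columns of V
  have hRV : R * V = V := by
    rw [hRdef, Matrix.sub_mul, Matrix.one_mul, Matrix.smul_mul, Matrix.mul_assoc, hV,
      Matrix.mul_one, two_smul]
    abel
  have hRx : ∀ j : Fin m, R *ᵥ (V *ᵥ Pi.single j 1) = V *ᵥ Pi.single j 1 := by
    intro j; rw [Matrix.mulVec_mulVec, hRV]
  -- conjugation: (R*S)^s = R * U^s * R
  have Ru : (Matrix (Fin k) (Fin k) ℂ)ˣ := ⟨R, R, hR2, hR2⟩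
  have hconj : ∀ s : ℕ, (R * S) ^ s = R * U ^ s * R := by
    intro s
    have hRU : R * U * R = R * S := by
      rw [hU', ← Matrix.mul_assoc, Matrix.mul_assoc (R * S) R R, hR2, Matrix.mul_one]
    have := Units.conj_pow (⟨R, R, hR2, hR2⟩ : (Matrix (Fin k) (Fin k) ℂ)ˣ) U s
    rw [← hRU]
    simpa using this
  -- reversibility of perfect state transfer
  have hrev : ∀ (s : ℕ) (a b : Fin m),
      U ^ s *ᵥ (V *ᵥ Pi.single a 1) = V *ᵥ Pi.single b 1 →
      U ^ s *ᵥ (V *ᵥ Pi.single b 1) = V *ᵥ Pi.single a 1 := by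
    intro s a b hab
    have h1 : (R * S) ^ s *ᵥ (V *ᵥ Pi.single a 1) = V *ᵥ Pi.single b 1 := by
      rw [hconj s, ← Matrix.mulVec_mulVec, ← Matrix.mulVec_mulVec, hRx, hab, hRx]
    have hcomm : Commute U (R * S) := by unfold Commute SemiconjBy; rw [hURS, hRSU]
    have h2 : U ^ s * (R * S) ^ s = 1 := by rw [← hcomm.mul_pow, hURS, one_pow]
    calc U ^ s *ᵥ (V *ᵥ Pi.single b 1)
        = U ^ s *ᵥ ((R * S) ^ s *ᵥ (V *ᵥ Pi.single a 1)) := by rw [h1]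
      _ = (U ^ s * (R * S) ^ s) *ᵥ (V *ᵥ Pi.single a 1) := Matrix.mulVec_mulVec _ _ _
      _ = V *ᵥ Pi.single a 1 := by rw [h2, Matrix.one_mulVec]
  have hvu := hrev τ u v hPST
  have hwu := hrev t u w hPSTw
  -- periods 2τ and 2t
  have hper : ∀ (s : ℕ) (b : Fin m),
      U ^ s *ᵥ (V *ᵥ Pi.single u 1) = V *ᵥ Pi.single b 1 →
      U ^ s *ᵥ (V *ᵥ Pi.single b 1) = V *ᵥ Pi.single u 1 →
      U ^ (2 * s) *ᵥ (V *ᵥ Pi.single u 1) = V *ᵥ Pi.single u 1 := by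
    intro s b h1 h2
    rw [two_mul, pow_add, ← Matrix.mulVec_mulVec, h1, h2]
  have hpτ := hper τ v hPST hvu
  have hpt := hper t w hPSTw hwu
  -- period 2·gcd τ t via Bezout
  set g : ℕ := Nat.gcd τ t with hgdef
  have hgpos : 0 < g := Nat.gcd_pos_of_pos_left t (lt_of_lt_of_le one_pos hτ)
  set Uu : (Matrix (Fin k) (Fin k) ℂ)ˣ := ⟨U, R * S, hURS, hRSU⟩ with hUu
  have hUuval : (Uu : Matrix (Fin k) (Fin k) ℂ) = U := rfl
  have hfixnat : ∀ s : ℕ, U ^ (2 * s) *ᵥ (V *ᵥ Pi.single u 1) = V *ᵥ Pi.single u 1 →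
      ((Uu ^ ((2 * s : ℕ) : ℤ) : (Matrix (Fin k) (Fin k) ℂ)ˣ) : Matrix (Fin k) (Fin k) ℂ)
        *ᵥ (V *ᵥ Pi.single u 1) = V *ᵥ Pi.single u 1 := by
    intro s hs
    rw [zpow_natCast, Units.val_pow_eq_pow_val, hUuval]
    exact hs
  have hbezout : ((2 * g : ℕ) : ℤ) =
      ((2 * τ : ℕ) : ℤ) * Nat.gcdA τ t + ((2 * t : ℕ) : ℤ) * Nat.gcdB τ t := by
    have hA := Nat.gcd_eq_gcd_ab τ t
    push_cast
    rw [hgdef]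
    push_cast [hA]
    ring
  have hperg : U ^ (2 * g) *ᵥ (V *ᵥ Pi.single u 1) = V *ᵥ Pi.single u 1 := by
    have hz : ((Uu ^ ((2 * g : ℕ) : ℤ) : (Matrix (Fin k) (Fin k) ℂ)ˣ) :
        Matrix (Fin k) (Fin k) ℂ) *ᵥ (V *ᵥ Pi.single u 1) = V *ᵥ Pi.single u 1 := by
      rw [hbezout, _root_.zpow_add, _root_.zpow_mul, _root_.zpow_mul, Units.val_mul, ← Matrix.mulVec_mulVec]
      rw [fix_zpow (Uu ^ ((2 * t : ℕ) : ℤ)) (V *ᵥ Pi.single u 1)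
        (by rw [zpow_natCast, Units.val_pow_eq_pow_val, hUuval]; exact hpt) (Nat.gcdB τ t)]
      rw [fix_zpow (Uu ^ ((2 * τ : ℕ) : ℤ)) (V *ᵥ Pi.single u 1)
        (by rw [zpow_natCast, Units.val_pow_eq_pow_val, hUuval]; exact hpτ) (Nat.gcdA τ t)]
    rw [zpow_natCast, Units.val_pow_eq_pow_val, hUuval] at hz
    exact hz
  -- parity analysis
  have keyfact : ∀ (s : ℕ) (b : Fin m), g ∣ s →
      U ^ s *ᵥ (V *ᵥ Pi.single u 1) = V *ᵥ Pi.single b 1 →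
      (V *ᵥ Pi.single b 1 = V *ᵥ Pi.single u 1) ∨
      (V *ᵥ Pi.single b 1 = U ^ g *ᵥ (V *ᵥ Pi.single u 1)) := by
    intro s b hdvd hsb
    obtain ⟨a, ha⟩ := hdvd
    rcases Nat.even_or_odd a with ⟨c, hc⟩ | ⟨c, hc⟩
    · left
      rw [← hsb, ha, hc, show g * (c + c) = (2 * g) * c by ring, pow_mul]
      exact fix_pow _ _ hperg c
    · right
      rw [← hsb, ha, hc, show g * (2 * c + 1) = g + (2 * g) * c by ring, pow_add,
        ← Matrix.mulVec_mulVec, pow_mul, fix_pow _ _ hperg c]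
  have hv' := keyfact τ v (Nat.gcd_dvd_left τ t) hPST
  have hw' := keyfact t w (Nat.gcd_dvd_right τ t) hPSTw
  rcases hv' with hv1 | hv2
  · exact huv (colinj u v hv1.symm)
  rcases hw' with hw1 | hw2
  · exact huw (colinj u w hw1.symm)
  exact hvw (colinj v w (hv2.trans hw2.symm))
end

section
/- If −1 is not an eigenvalue of U, then m = n (the two reflections are through subspaces of equal dimension). -/
open Matrix

lemma exists_ker_vec {a b : ℕ} (A : Matrix (Fin a) (Fin b) ℂ) (h : a < b) :
    ∃ y : Fin b → ℂ, y ≠ 0 ∧ A *ᵥ y = 0 := by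
  have hni : ¬ Function.Injective A.mulVecLin := by
    intro hinj
    have := LinearMap.finrank_le_finrank_of_injective hinj
    simp [Module.finrank_pi] at this
    omega
  rw [← LinearMap.ker_eq_bot] at hni
  obtain ⟨y, hy, hy0⟩ := Submodule.exists_mem_ne_zero_of_ne_bot hni
  exact ⟨y, hy0, hy⟩

theorem stmt_6 (k m n : ℕ) (hk : 0 < k) (hm : 0 < m) (hn : 0 < n)
    (V : Matrix (Fin k) (Fin m) ℂ) (W : Matrix (Fin k) (Fin n) ℂ)
    (hV : Vᴴ * V = 1) (hW : Wᴴ * W = 1)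
    (U : Matrix (Fin k) (Fin k) ℂ)
    (hU : U = (2 • (W * Wᴴ) - 1) * (2 • (V * Vᴴ) - 1))
    (hEig : ¬ ∃ x : Fin k → ℂ, x ≠ 0 ∧ U *ᵥ x = (-1 : ℂ) • x) :
    m = n := by
  by_contra hmn
  apply hEig
  rcases lt_or_gt_of_ne hmn with hlt | hgt
  · -- m < n : take y with Vᴴ W y = 0, x = W y
    obtain ⟨y, hy0, hAy⟩ := exists_ker_vec (Vᴴ * W) hlt
    refine ⟨W *ᵥ y, ?_, ?_⟩
    · intro hx
      apply hy0
      have : Wᴴ *ᵥ (W *ᵥ y) = y := by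
        rw [mulVec_mulVec, hW, one_mulVec]
      rw [hx, mulVec_zero] at this
      exact this.symm
    · have h1 : (V * Vᴴ) *ᵥ (W *ᵥ y) = 0 := by
        rw [mulVec_mulVec, Matrix.mul_assoc, ← mulVec_mulVec, hAy, mulVec_zero]
      have h2 : (W * Wᴴ) *ᵥ (W *ᵥ y) = W *ᵥ y := by
        rw [mulVec_mulVec, Matrix.mul_assoc, hW, Matrix.mul_one]
      have hx1 : (2 • (V * Vᴴ) - 1) *ᵥ (W *ᵥ y) = -(W *ᵥ y) := by
        rw [sub_mulVec, smul_mulVec, h1, one_mulVec, smul_zero, zero_sub]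
      rw [hU, ← mulVec_mulVec, hx1, mulVec_neg, sub_mulVec, smul_mulVec, h2,
        one_mulVec, two_smul]
      simp
  · -- n < m : take y with Wᴴ V y = 0, x = V y
    obtain ⟨y, hy0, hAy⟩ := exists_ker_vec (Wᴴ * V) hgt
    refine ⟨V *ᵥ y, ?_, ?_⟩
    · intro hx
      apply hy0
      have : Vᴴ *ᵥ (V *ᵥ y) = y := by
        rw [mulVec_mulVec, hV, one_mulVec]
      rw [hx, mulVec_zero] at this
      exact this.symm
    · have h1 : (V * Vᴴ) *ᵥ (V *ᵥ y) = V *ᵥ y := by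
        rw [mulVec_mulVec, Matrix.mul_assoc, hV, Matrix.mul_one]
      have h2 : (W * Wᴴ) *ᵥ (V *ᵥ y) = 0 := by
        rw [mulVec_mulVec, Matrix.mul_assoc, ← mulVec_mulVec, hAy, mulVec_zero]
      have hx1 : (2 • (V * Vᴴ) - 1) *ᵥ (V *ᵥ y) = V *ᵥ y := by
        rw [sub_mulVec, smul_mulVec, h1, one_mulVec, two_smul,
          add_sub_cancel_right]
      rw [hU, ← mulVec_mulVec, hx1, sub_mulVec, smul_mulVec, h2, one_mulVec,
        smul_zero, zero_sub]
      simp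
end

section
/- Let λ be a real number with λ ≠ 0 and λ ≠ 1, and let v ∈ ℂ^m be an eigenvector of the Hermitian matrix VᴴWWᴴV with eigenvalue λ. Then the quadratic polynomial p(t) = t² − (4λ − 2)t + 1 annihilates U on the span of V v and W Wᴴ V v; that is, U²(V v) − (4λ−2)·U(V v) + V v = 0 and U²(WWᴴV v) − (4λ−2)·U(WWᴴV v) + WWᴴV v = 0. -/
open Matrix

theorem stmt_7 (k m n : ℕ) (hk : 0 < k) (hm : 0 < m) (hn : 0 < n)
    (V : Matrix (Fin k) (Fin m) ℂ) (W : Matrix (Fin k) (Fin n) ℂ)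
    (hV : Vᴴ * V = 1) (hW : Wᴴ * W = 1)
    (U : Matrix (Fin k) (Fin k) ℂ)
    (hU : U = (2 • (W * Wᴴ) - 1) * (2 • (V * Vᴴ) - 1))
    (lam : ℝ) (hlam0 : lam ≠ 0) (hlam1 : lam ≠ 1)
    (v : Fin m → ℂ) (hv0 : v ≠ 0)
    (hv : (Vᴴ * W * Wᴴ * V) *ᵥ v = (lam : ℂ) • v) :
    (U ^ 2) *ᵥ (V *ᵥ v) - ((4 * lam - 2 : ℝ) : ℂ) • (U *ᵥ (V *ᵥ v)) + V *ᵥ v = 0 ∧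
    (U ^ 2) *ᵥ ((W * Wᴴ * V) *ᵥ v)
      - ((4 * lam - 2 : ℝ) : ℂ) • (U *ᵥ ((W * Wᴴ * V) *ᵥ v))
      + (W * Wᴴ * V) *ᵥ v = 0 := by
  set a := V *ᵥ v with ha
  set b := (W * Wᴴ * V) *ᵥ v with hb
  set l : ℂ := (lam : ℂ) with hl
  have expand : ∀ (M : Matrix (Fin k) (Fin k) ℂ) (x : Fin k → ℂ),
      (2 • M - 1) *ᵥ x = (2 : ℂ) • (M *ᵥ x) - x := by
    intro M x
    rw [two_smul ℕ M, two_smul ℂ (M *ᵥ x), sub_mulVec, add_mulVec, one_mulVec]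
  have hPa : (V * Vᴴ) *ᵥ a = a := by
    rw [ha, mulVec_mulVec, Matrix.mul_assoc, hV, Matrix.mul_one]
  have hQa : (W * Wᴴ) *ᵥ a = b := by
    rw [ha, hb, mulVec_mulVec]
  have hQb : (W * Wᴴ) *ᵥ b = b := by
    rw [hb, mulVec_mulVec]
    congr 1
    simp only [Matrix.mul_assoc]
    rw [← Matrix.mul_assoc Wᴴ W (Wᴴ * V), hW, Matrix.one_mul]
  have hPb : (V * Vᴴ) *ᵥ b = l • a := by
    rw [hb, mulVec_mulVec,
      show V * Vᴴ * (W * Wᴴ * V) = V * (Vᴴ * W * Wᴴ * V) by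
        simp only [Matrix.mul_assoc],
      ← mulVec_mulVec, hv, mulVec_smul, ha, hl]
  have hUa : U *ᵥ a = (2 : ℂ) • b - a := by
    rw [hU, ← mulVec_mulVec, expand, expand, hPa,
      show (2 : ℂ) • a - a = a by module, hQa]
  have hUb : U *ᵥ b = (4 * l - 1) • b - (2 * l) • a := by
    rw [hU, ← mulVec_mulVec, expand, expand, hPb, mulVec_sub, mulVec_smul,
      mulVec_smul, hQa, hQb]
    module
  have hc : ((4 * lam - 2 : ℝ) : ℂ) = 4 * l - 2 := by push_cast [hl]; ring
  constructor
  · rw [pow_two, ← mulVec_mulVec, hUa, hc, mulVec_sub, mulVec_smul, hUa, hUb]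
    module
  · rw [pow_two, ← mulVec_mulVec, hUb, hc, mulVec_sub, mulVec_smul, mulVec_smul,
      hUa, hUb]
    module
end

section
/- Every diagonal entry of U equals 4α/(kd) − 2/k − 2/d + 1, and consequently the trace of U equals 4α|𝒱|/k − 2|ℱ| − 2|𝒱| + |A|. -/
/-! Every row of `N` is a standard basis vector `e (f a)` and every row of `M` is `e (g a)`.
So `(N * Nᵀ) a a = (M * Mᵀ) a a = 1` and `(M * Mᵀ * (N * Nᵀ)) a a = (Nᵀ * M) (f a) (g a)`:
this entry is at least `1` (the term of `a` itself), so it equals `α`. Expanding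
`U = 4 P Q - 2 P - 2 Q + 1` gives the diagonal entries. The trace is `|A|` times that value,
and counting the ones of `N` and of `M` by rows and by columns gives `|A| = d |𝒱| = k |ℱ|`. -/

open Matrix

namespace Matrix

variable {A B C R : Type*}

theorem exists_row_eq_single [DecidableEq B] [Zero R] [One R] {N : Matrix A B R}
    (h01 : ∀ a b, N a b = 0 ∨ N a b = 1) (hrow : ∀ a, ∃! b, N a b = 1) :
    ∃ f : A → B, ∀ a, N a = Pi.single (f a) 1 := by
  choose f hf hf_unique using hrow
  refine ⟨f, fun a => funext fun b => ?_⟩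
  rcases eq_or_ne b (f a) with rfl | hb
  · simp [hf]
  · rw [Pi.single_eq_of_ne hb]
    exact (h01 a b).resolve_right fun h => hb (hf_unique a b h)

section RowSingle

variable [Fintype B] [DecidableEq B] [NonAssocSemiring R] {N : Matrix A B R} {f : A → B}

theorem mul_apply_of_row_eq_single (hN : ∀ a, N a = Pi.single (f a) 1) (X : Matrix B C R)
    (a : A) (c : C) : (N * X) a c = X (f a) c := by
  simp [mul_apply, hN, Pi.single_apply]

theorem mul_transpose_apply_of_row_eq_single (hN : ∀ a, N a = Pi.single (f a) 1)
    (X : Matrix C B R) (c : C) (a : A) : (X * Nᵀ) c a = X c (f a) := by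
  simp [mul_apply, hN, Pi.single_apply]

theorem mul_transpose_self_apply_self_of_row_eq_single (hN : ∀ a, N a = Pi.single (f a) 1)
    (a : A) : (N * Nᵀ) a a = 1 := by
  simp [mul_transpose_apply_of_row_eq_single hN, hN]

theorem sum_row_eq_one_of_row_eq_single (hN : ∀ a, N a = Pi.single (f a) 1) (a : A) :
    ∑ b, N a b = 1 := by
  simp [hN]

end RowSingle

section TwoRowSingle

variable [Fintype A] [DecidableEq B] [DecidableEq C] {N : Matrix A B R} {M : Matrix A C R}
  {f : A → B} {g : A → C}

theorem mul_mul_transpose_mul_mul_transpose_apply_self [Fintype B] [Fintype C] [CommSemiring R]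
    (hN : ∀ a, N a = Pi.single (f a) 1) (hM : ∀ a, M a = Pi.single (g a) 1) (a : A) :
    (M * Mᵀ * (N * Nᵀ)) a a = (Nᵀ * M) (f a) (g a) := by
  rw [show M * Mᵀ * (N * Nᵀ) = M * (Mᵀ * N) * Nᵀ by simp only [Matrix.mul_assoc],
    mul_transpose_apply_of_row_eq_single hN, mul_apply_of_row_eq_single hM,
    ← transpose_transpose N, ← transpose_mul, transpose_apply, transpose_transpose]

theorem one_le_transpose_mul_apply_of_row_eq_single [Semiring R] [PartialOrder R]
    [IsOrderedRing R] (hN : ∀ a, N a = Pi.single (f a) 1) (hM : ∀ a, M a = Pi.single (g a) 1)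
    (a : A) : 1 ≤ (Nᵀ * M) (f a) (g a) := by
  have hnonneg : ∀ b, 0 ≤ N b (f a) * M b (g a) := fun b => by
    rw [hN, hM, Pi.single_apply, Pi.single_apply]
    split_ifs <;> simp
  calc 1 = N a (f a) * M a (g a) := by simp [hN, hM]
    _ ≤ ∑ b, N b (f a) * M b (g a) :=
        Finset.single_le_sum (fun b _ => hnonneg b) (Finset.mem_univ a)
    _ = (Nᵀ * M) (f a) (g a) := by simp only [mul_apply, transpose_apply]

end TwoRowSingle

theorem card_smul_eq_card_smul_of_row_col_sums [Fintype A] [Fintype B] [AddCommMonoid R]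
    {N : Matrix A B R} {r c : R} (hrow : ∀ a, ∑ b, N a b = r) (hcol : ∀ b, ∑ a, N a b = c) :
    Fintype.card A • r = Fintype.card B • c := by
  calc Fintype.card A • r = ∑ a, ∑ b, N a b := by simp [hrow]
    _ = ∑ b, ∑ a, N a b := Finset.sum_comm
    _ = Fintype.card B • c := by simp [hcol]

end Matrix

theorem stmt_8_general (A 𝒱 ℱ : Type*) [Fintype A] [Fintype 𝒱] [Fintype ℱ]
    [DecidableEq A]
    (d k α : ℕ) (hd : 0 < d) (hk : 0 < k)
    (N : Matrix A 𝒱 ℝ) (M : Matrix A ℱ ℝ)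
    (hN01 : ∀ a w, N a w = 0 ∨ N a w = 1)
    (hNrow : ∀ a : A, ∃! w : 𝒱, N a w = 1)
    (hNcol : ∀ w : 𝒱, ∑ a : A, N a w = d)
    (hM01 : ∀ a f, M a f = 0 ∨ M a f = 1)
    (hMrow : ∀ a : A, ∃! f : ℱ, M a f = 1)
    (hMcol : ∀ f : ℱ, ∑ a : A, M a f = k)
    (hC : ∀ w f, (Nᵀ * M) w f ≠ 0 → (Nᵀ * M) w f = α)
    (Q P U : Matrix A A ℝ)
    (hQ : Q = (d : ℝ)⁻¹ • (N * Nᵀ))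
    (hP : P = (k : ℝ)⁻¹ • (M * Mᵀ))
    (hU : U = (2 • P - 1) * (2 • Q - 1)) :
    (∀ a : A, U a a = 4 * α / (k * d) - 2 / k - 2 / d + 1) ∧
    U.trace = 4 * α * (Fintype.card 𝒱) / k - 2 * (Fintype.card ℱ)
      - 2 * (Fintype.card 𝒱) + (Fintype.card A) := by
  classical
  obtain ⟨f, hf⟩ := exists_row_eq_single hN01 hNrow
  obtain ⟨g, hg⟩ := exists_row_eq_single hM01 hMrow
  have hcommon : ∀ a, (Nᵀ * M) (f a) (g a) = α := fun a =>
    hC _ _ (zero_lt_one.trans_le (one_le_transpose_mul_apply_of_row_eq_single hf hg a)).ne'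
  have hexpand : U = 4 • (P * Q) - 2 • P - 2 • Q + 1 := by
    rw [hU]; noncomm_ring
  have hdiag : ∀ a, U a a = 4 * α / (k * d) - 2 / k - 2 / d + 1 := fun a => by
    simp only [hexpand, Matrix.add_apply, Matrix.sub_apply, Matrix.smul_apply, one_apply_eq]
    simp only [hP, hQ, smul_mul_smul_comm, Matrix.smul_apply, smul_eq_mul, nsmul_eq_mul,
      mul_mul_transpose_mul_mul_transpose_apply_self hf hg, hcommon,
      mul_transpose_self_apply_self_of_row_eq_single hf,
      mul_transpose_self_apply_self_of_row_eq_single hg]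
    ring
  have hcard𝒱 : (Fintype.card A : ℝ) = Fintype.card 𝒱 * d := by
    simpa using card_smul_eq_card_smul_of_row_col_sums (sum_row_eq_one_of_row_eq_single hf) hNcol
  have hcardℱ : (Fintype.card A : ℝ) = Fintype.card ℱ * k := by
    simpa using card_smul_eq_card_smul_of_row_col_sums (sum_row_eq_one_of_row_eq_single hg) hMcol
  refine ⟨hdiag, ?_⟩
  simp only [trace, diag_apply, hdiag, Finset.sum_const, Finset.card_univ, nsmul_eq_mul]
  have hk0 : (k : ℝ) ≠ 0 := by positivity
  have hd0 : (d : ℝ) ≠ 0 := by positivity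
  linear_combination (norm := skip) (4 * α / (k * d) - 2 / d) * hcard𝒱 - 2 / k * hcardℱ
  field_simp
  ring

theorem stmt_8 (A 𝒱 ℱ : Type*) [Fintype A] [Fintype 𝒱] [Fintype ℱ]
    [DecidableEq A] [DecidableEq 𝒱] [DecidableEq ℱ]
    [Nonempty A] [Nonempty 𝒱] [Nonempty ℱ]
    (d k α : ℕ) (hd : 0 < d) (hk : 0 < k) (hα : 0 < α)
    (N : Matrix A 𝒱 ℝ) (M : Matrix A ℱ ℝ)
    (hN01 : ∀ a w, N a w = 0 ∨ N a w = 1)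
    (hNrow : ∀ a : A, ∃! w : 𝒱, N a w = 1)
    (hNcol : ∀ w : 𝒱, ∑ a : A, N a w = d)
    (hM01 : ∀ a f, M a f = 0 ∨ M a f = 1)
    (hMrow : ∀ a : A, ∃! f : ℱ, M a f = 1)
    (hMcol : ∀ f : ℱ, ∑ a : A, M a f = k)
    (hC : ∀ w f, (Nᵀ * M) w f ≠ 0 → (Nᵀ * M) w f = α)
    (Q P U : Matrix A A ℝ)
    (hQ : Q = (d : ℝ)⁻¹ • (N * Nᵀ))
    (hP : P = (k : ℝ)⁻¹ • (M * Mᵀ))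
    (hU : U = (2 • P - 1) * (2 • Q - 1)) :
    (∀ a : A, U a a = 4 * α / (k * d) - 2 / k - 2 / d + 1) ∧
    U.trace = 4 * α * (Fintype.card 𝒱) / k - 2 * (Fintype.card ℱ)
      - 2 * (Fintype.card 𝒱) + (Fintype.card A) :=
  stmt_8_general A 𝒱 ℱ d k α hd hk N M hN01 hNrow hNcol hM01 hMrow hMcol hC Q P U hQ hP hU
end

section
/- Suppose that for some integer τ ≥ 1 and some vector x ∈ ℝ^A of Euclidean norm 1 we have U^τ ((1/√d)·N e_u) = x, and that x_a = 0 for every a ∈ A with N(a, v) = 0 (i.e., x is supported on the rows whose unique 1 lies in column v). Then x = (1/√d)·N e_v. -/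
/-! The all-ones vector is fixed by `Uᵀ`, so `U` preserves coordinate sums and `x` has sum
`√d`. Being supported on the `d` rows of column `v` and of norm `1`, `x` attains equality in
Cauchy–Schwarz against the indicator of that support, hence is constant there, equal to `1/√d`. -/

open Matrix Finset

theorem Finset.eq_of_sum_eq_card_mul_of_sum_sq_eq_card_mul {ι : Type*} (s : Finset ι)
    (x : ι → ℝ) (c : ℝ) (hsum : ∑ i ∈ s, x i = #s * c)
    (hsq : ∑ i ∈ s, x i ^ 2 = #s * c ^ 2) : ∀ i ∈ s, x i = c := by
  have hdev : ∑ i ∈ s, (x i - c) ^ 2 = 0 := by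
    calc ∑ i ∈ s, (x i - c) ^ 2
        = ∑ i ∈ s, x i ^ 2 - 2 * c * ∑ i ∈ s, x i + #s * c ^ 2 := by
          simp only [sub_sq, sum_add_distrib, sum_sub_distrib, ← sum_mul, ← mul_sum, sum_const,
            nsmul_eq_mul]
          ring
      _ = 0 := by rw [hsum, hsq]; ring
  intro i hi
  have := (sum_eq_zero_iff_of_nonneg fun j _ => sq_nonneg (x j - c)).mp hdev i hi
  linarith [pow_eq_zero_iff two_ne_zero |>.mp this]

theorem Finset.sum_eq_card_filter_eq_one {ι : Type*} [Fintype ι] (f : ι → ℝ)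
    (hf : ∀ i, f i = 0 ∨ f i = 1) : ∑ i, f i = #{i | f i = 1} := by
  rw [card_filter, Nat.cast_sum]
  refine sum_congr rfl fun i _ => ?_
  rcases hf i with h | h <;> simp [h]

theorem Matrix.sum_pow_mulVec_of_transpose_mulVec_one {n R : Type*} [Fintype n] [DecidableEq n]
    [CommSemiring R] (U : Matrix n n R) (hU : Uᵀ *ᵥ 1 = 1) (k : ℕ) (y : n → R) :
    ∑ i, (U ^ k *ᵥ y) i = ∑ i, y i := by
  have hfix : ∀ k : ℕ, 1 ᵥ* U ^ k = 1 := by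
    intro k
    induction k with
    | zero => simp
    | succ k ih => rw [pow_succ, ← vecMul_vecMul, ih, ← mulVec_transpose, hU]
  rw [← one_dotProduct, dotProduct_mulVec, hfix, one_dotProduct]

theorem stmt_9_general (A 𝒱 : Type*) [Fintype A] [Fintype 𝒱]
    [DecidableEq A] [DecidableEq 𝒱]
    (N : Matrix A 𝒱 ℝ)
    (hN01 : ∀ a w, N a w = 0 ∨ N a w = 1)
    (u v : 𝒱) (d : ℕ) (hd : 0 < d)
    (hNu : ∑ a : A, N a u = d) (hNv : ∑ a : A, N a v = d)
    (U : Matrix A A ℝ)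
    (hUones : Uᵀ *ᵥ (fun _ => 1) = fun _ => 1)
    (τ : ℕ)
    (x : A → ℝ) (hxnorm : ∑ a : A, (x a) ^ 2 = 1)
    (hxeq : (U ^ τ) *ᵥ ((Real.sqrt d)⁻¹ • (N *ᵥ Pi.single u 1)) = x)
    (hxsupp : ∀ a : A, N a v = 0 → x a = 0) :
    x = (Real.sqrt d)⁻¹ • (N *ᵥ Pi.single v 1) := by
  have hsqrt : Real.sqrt d ≠ 0 := (Real.sqrt_pos.mpr (mod_cast hd)).ne'
  have hsq : Real.sqrt d ^ 2 = d := Real.sq_sqrt d.cast_nonneg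
  set S : Finset A := {a | N a v = 1}
  have hS : (#S : ℝ) = d := by rw [← hNv, sum_eq_card_filter_eq_one _ (hN01 · v)]
  have hxS : ∀ a ∉ S, x a = 0 := fun a ha =>
    hxsupp a ((hN01 a v).resolve_right (by simpa [S] using ha))
  have hsum : ∑ a ∈ S, x a = #S * (Real.sqrt d)⁻¹ := by
    rw [sum_subset (subset_univ S) fun a _ => hxS a, ← hxeq,
      sum_pow_mulVec_of_transpose_mulVec_one U hUones, hS]
    simp only [mulVec_single_one, Pi.smul_apply, col_apply, smul_eq_mul, ← mul_sum, hNu]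
    field_simp
  have hsumsq : ∑ a ∈ S, x a ^ 2 = #S * (Real.sqrt d)⁻¹ ^ 2 := by
    rw [sum_subset (subset_univ S) fun a _ ha => by simp [hxS a ha], hxnorm, hS, inv_pow, hsq,
      mul_inv_cancel₀ (by positivity)]
  have hconst := eq_of_sum_eq_card_mul_of_sum_sq_eq_card_mul S x _ hsum hsumsq
  ext a
  simp only [mulVec_single_one, Pi.smul_apply, col_apply, smul_eq_mul]
  rcases hN01 a v with h | h
  · rw [h, hxsupp a h, mul_zero]
  · rw [h, hconst a (by simpa [S] using h), mul_one]

theorem stmt_9 (A 𝒱 : Type*) [Fintype A] [Fintype 𝒱]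
    [DecidableEq A] [DecidableEq 𝒱] [Nonempty A] [Nonempty 𝒱]
    (N : Matrix A 𝒱 ℝ)
    (hN01 : ∀ a w, N a w = 0 ∨ N a w = 1)
    (hNrow : ∀ a : A, ∃! w : 𝒱, N a w = 1)
    (u v : 𝒱) (huv : u ≠ v) (d : ℕ) (hd : 0 < d)
    (hNu : ∑ a : A, N a u = d) (hNv : ∑ a : A, N a v = d)
    (U : Matrix A A ℝ) (hUorth : Uᵀ * U = 1)
    (hUones : Uᵀ *ᵥ (fun _ => 1) = fun _ => 1)
    (τ : ℕ) (hτ : 1 ≤ τ)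
    (x : A → ℝ) (hxnorm : ∑ a : A, (x a) ^ 2 = 1)
    (hxeq : (U ^ τ) *ᵥ ((Real.sqrt d)⁻¹ • (N *ᵥ Pi.single u 1)) = x)
    (hxsupp : ∀ a : A, N a v = 0 → x a = 0) :
    x = (Real.sqrt d)⁻¹ • (N *ᵥ Pi.single v 1) :=
  stmt_9_general A 𝒱 N hN01 u v d hd hNu hNv U hUones τ x hxnorm hxeq hxsupp
end

section
/- For every integer τ ≥ 1: U^τ = I_k if and only if U^τ V = V and (τ is even, or m = n). Moreover, if U^τ V = V then U^{2τ} = I_k. -/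
open Matrix

-- idempotent ⇒ reflection squares to 1
lemma aux_invol {K : Type*} [Ring K] {A : K} (h : A * A = A) :
    (2 • A - 1) * (2 • A - 1) = 1 := by
  have h2 : (2 • A : K) = A + A := two_smul ℕ A
  rw [h2]
  calc (A + A - 1) * (A + A - 1)
      = A*A + A*A + A*A + A*A - A - A - A - A + 1 := by noncomm_ring
    _ = 1 := by rw [h]; abel

lemma aux_trace_zero {p : ℕ} (N : Matrix (Fin p) (Fin p) ℂ)
    (h : trace (Nᴴ * N) = 0) : N = 0 := by
  have h2 : ((∑ j, ∑ i, Complex.normSq (N i j) : ℝ) : ℂ) = 0 := by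
    rw [← h]
    simp [Matrix.trace, Matrix.diag, Matrix.mul_apply, Matrix.conjTranspose_apply,
      Complex.normSq_eq_conj_mul_self]
  have h3 : (∑ j, ∑ i, Complex.normSq (N i j) : ℝ) = 0 := by exact_mod_cast h2
  ext i j
  have h4 := (Finset.sum_eq_zero_iff_of_nonneg
    (fun j _ => Finset.sum_nonneg fun i _ => Complex.normSq_nonneg _)).mp h3 j (Finset.mem_univ _)
  have h5 := (Finset.sum_eq_zero_iff_of_nonneg
    (fun i _ => Complex.normSq_nonneg _)).mp h4 i (Finset.mem_univ _)
  simpa using Complex.normSq_eq_zero.mp h5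

theorem stmt_11 (k m n : ℕ) (hk : 0 < k) (hm : 0 < m) (hn : 0 < n)
    (V : Matrix (Fin k) (Fin m) ℂ) (W : Matrix (Fin k) (Fin n) ℂ)
    (hV : Vᴴ * V = 1) (hW : Wᴴ * W = 1)
    (U : Matrix (Fin k) (Fin k) ℂ)
    (hU : U = (2 • (W * Wᴴ) - 1) * (2 • (V * Vᴴ) - 1))
    (τ : ℕ) (hτ : 1 ≤ τ) :
    (U ^ τ = 1 ↔ (U ^ τ * V = V ∧ (Even τ ∨ m = n))) ∧
    (U ^ τ * V = V → U ^ (2 * τ) = 1) := by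
  set P : Matrix (Fin k) (Fin k) ℂ := 2 • (V * Vᴴ) - 1 with hPdef
  set Q : Matrix (Fin k) (Fin k) ℂ := 2 • (W * Wᴴ) - 1 with hQdef
  set U' : Matrix (Fin k) (Fin k) ℂ := P * Q with hU'def
  have hVV : (V * Vᴴ) * (V * Vᴴ) = V * Vᴴ := by
    rw [Matrix.mul_assoc, ← Matrix.mul_assoc Vᴴ V Vᴴ, hV, Matrix.one_mul]
  have hWW : (W * Wᴴ) * (W * Wᴴ) = W * Wᴴ := by
    rw [Matrix.mul_assoc, ← Matrix.mul_assoc Wᴴ W Wᴴ, hW, Matrix.one_mul]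
  have hPP : P * P = 1 := aux_invol hVV
  have hQQ : Q * Q = 1 := aux_invol hWW
  have hPH : Pᴴ = P := by
    rw [hPdef, conjTranspose_sub, conjTranspose_nsmul, conjTranspose_mul,
      conjTranspose_conjTranspose, conjTranspose_one]
  have hQH : Qᴴ = Q := by
    rw [hQdef, conjTranspose_sub, conjTranspose_nsmul, conjTranspose_mul,
      conjTranspose_conjTranspose, conjTranspose_one]
  have hUH : Uᴴ = U' := by rw [hU, hU'def, conjTranspose_mul, hPH, hQH]
  have hU'H : U'ᴴ = U := by rw [← hUH, conjTranspose_conjTranspose]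
  have hUU' : U * U' = 1 := by
    rw [hU, hU'def, Matrix.mul_assoc, ← Matrix.mul_assoc P P Q, hPP, Matrix.one_mul, hQQ]
  have hU'U : U' * U = 1 := by
    rw [hU, hU'def, Matrix.mul_assoc, ← Matrix.mul_assoc Q Q P, hQQ, Matrix.one_mul, hPP]
  have hpow : ∀ j : ℕ, U' ^ j * U ^ j = 1 := by
    intro j
    induction j with
    | zero => simp
    | succ i ih =>
      rw [pow_succ U' i, pow_succ' U i, mul_assoc, ← mul_assoc U' U, hU'U, one_mul, ih]
  have hUP : U * P = Q := by rw [hU, Matrix.mul_assoc, hPP, Matrix.mul_one]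
  have hPU' : P * U' = Q := by rw [hU'def, ← Matrix.mul_assoc, hPP, Matrix.one_mul]
  have hPUP : P * U * P = U' := by
    rw [hU, hU'def, ← Matrix.mul_assoc, Matrix.mul_assoc (P * Q) P P, hPP, Matrix.mul_one]
  have hPV : P * V = V := by
    have : P * V = 2 • (V * (Vᴴ * V)) - V := by
      rw [hPdef, Matrix.sub_mul, Matrix.one_mul, Matrix.smul_mul, Matrix.mul_assoc]
    rw [this, hV, Matrix.mul_one, two_smul]
    abel
  have hUsP : ∀ j : ℕ, U ^ j * P = P * U' ^ j := by
    intro j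
    induction j with
    | zero => simp
    | succ i ih =>
      rw [pow_succ' U i, pow_succ' U' i, mul_assoc, ih, ← mul_assoc, hUP,
        ← mul_assoc, hPU']
  have htrP : trace P = 2 * (m : ℂ) - (k : ℂ) := by
    rw [hPdef, trace_sub, trace_smul, trace_mul_comm, hV, trace_one, trace_one]
    simp [Fintype.card_fin, nsmul_eq_mul]
  have htrQ : trace Q = 2 * (n : ℂ) - (k : ℂ) := by
    rw [hQdef, trace_sub, trace_smul, trace_mul_comm, hW, trace_one, trace_one]
    simp [Fintype.card_fin, nsmul_eq_mul]
  -- for odd τ, trace (U^(τ+1) * P) = trace P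
  have htr : ¬ Even τ → trace (U ^ (τ + 1) * P) = trace P := by
    intro he
    obtain ⟨c, hc⟩ := Nat.not_even_iff_odd.mp he
    have h1 : τ + 1 = (c + 1) + (c + 1) := by omega
    rw [h1, pow_add, mul_assoc, hUsP (c + 1), ← mul_assoc, trace_mul_comm,
      ← mul_assoc, hpow (c + 1), one_mul]
  -- core consequences of U^τ * V = V
  have core : U ^ τ * V = V →
      (U ^ τ * U ^ τ = 1 ∧ ((Even τ ∨ m = n) → U ^ τ = 1)) := by
    intro hBV
    have hU'V : U' ^ τ * V = V := by
      calc U' ^ τ * V = U' ^ τ * (U ^ τ * V) := by rw [hBV]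
        _ = (U' ^ τ * U ^ τ) * V := by rw [Matrix.mul_assoc]
        _ = V := by rw [hpow τ, Matrix.one_mul]
    have hVB : Vᴴ * U ^ τ = Vᴴ := by
      have := congrArg conjTranspose hU'V
      rwa [conjTranspose_mul, conjTranspose_pow, hU'H] at this
    have hNV : (1 - U ^ τ) * V = 0 := by
      rw [Matrix.sub_mul, Matrix.one_mul, hBV, sub_self]
    have hVN : Vᴴ * (1 - U ^ τ) = 0 := by
      rw [Matrix.mul_sub, Matrix.mul_one, hVB, sub_self]
    have hNP : (1 - U ^ τ) * P = -(1 - U ^ τ) := by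
      have : (1 - U ^ τ) * P = 2 • ((1 - U ^ τ) * V * Vᴴ) - (1 - U ^ τ) := by
        rw [hPdef, Matrix.mul_sub, Matrix.mul_one, Matrix.mul_smul, Matrix.mul_assoc]
      rw [this, hNV, Matrix.zero_mul, smul_zero, zero_sub]
    have hPN : P * (1 - U ^ τ) = -(1 - U ^ τ) := by
      have : P * (1 - U ^ τ) = 2 • (V * (Vᴴ * (1 - U ^ τ))) - (1 - U ^ τ) := by
        rw [hPdef, Matrix.sub_mul, Matrix.one_mul, Matrix.smul_mul, Matrix.mul_assoc]
      rw [this, hVN, Matrix.mul_zero, smul_zero, zero_sub]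
    have hBPc : U ^ τ * P = P * U ^ τ := by
      have h2 : P - U ^ τ * P = P - P * U ^ τ := by
        calc P - U ^ τ * P = (1 - U ^ τ) * P := by rw [sub_mul, one_mul]
          _ = P * (1 - U ^ τ) := by rw [hNP, hPN]
          _ = P - P * U ^ τ := by rw [mul_sub, mul_one]
      exact sub_right_injective h2
    have hB'B : U' ^ τ = U ^ τ := by
      have h1 : P * (U ^ τ * P) = P * P * U' ^ τ := by
        rw [hUsP τ, mul_assoc]
      rw [hPP, one_mul, hBPc, ← mul_assoc, hPP, one_mul] at h1
      exact h1.symm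
    have hB2 : U ^ τ * U ^ τ = 1 := by
      nth_rewrite 1 [← hB'B]
      exact hpow τ
    refine ⟨hB2, ?_⟩
    have hUN : U * (1 - U ^ τ) = (1 - U ^ τ) * U := by
      rw [mul_sub, sub_mul, mul_one, one_mul, ← pow_succ, ← pow_succ']
    have hU'N : U' * (1 - U ^ τ) = (1 - U ^ τ) * U := by
      calc U' * (1 - U ^ τ) = P * U * P * (1 - U ^ τ) := by rw [hPUP]
        _ = P * U * (P * (1 - U ^ τ)) := by rw [mul_assoc]
        _ = P * U * (-(1 - U ^ τ)) := by rw [hPN]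
        _ = -(P * (U * (1 - U ^ τ))) := by rw [mul_neg, mul_assoc]
        _ = -(P * ((1 - U ^ τ) * U)) := by rw [hUN]
        _ = -(P * (1 - U ^ τ) * U) := by rw [mul_assoc]
        _ = -(-(1 - U ^ τ) * U) := by rw [hPN]
        _ = (1 - U ^ τ) * U := by rw [neg_mul, neg_neg]
    have hNU2 : (1 - U ^ τ) * (U * U) = 1 - U ^ τ := by
      have h1 : U * (U' * (1 - U ^ τ)) = U * ((1 - U ^ τ) * U) := by rw [hU'N]
      rw [← mul_assoc, hUU', one_mul] at h1
      rw [← mul_assoc, hUN, mul_assoc] at h1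
      exact h1.symm
    have hNU2j : ∀ j : ℕ, (1 - U ^ τ) * U ^ (2 * j) = 1 - U ^ τ := by
      intro j
      induction j with
      | zero => simp
      | succ i ih =>
        have h2 : 2 * (i + 1) = 2 * i + 2 := by ring
        rw [h2, pow_add, ← mul_assoc, ih, pow_two]
        exact hNU2
    have hNB : (1 - U ^ τ) * U ^ τ = -(1 - U ^ τ) := by
      rw [sub_mul, one_mul, hB2, neg_sub]
    have hEvenCase : Even τ → U ^ τ = 1 := by
      rintro ⟨r, hr⟩
      have h2 : 2 * r = τ := by omega
      have h1 := hNU2j r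
      rw [h2, hNB] at h1
      have h3 := neg_eq_iff_add_eq_zero.mp h1
      have h4 : (2 : ℂ) • (1 - U ^ τ) = 0 := by rw [two_smul]; exact h3
      have hN0 : (1 - U ^ τ) = 0 :=
        (smul_eq_zero.mp h4).resolve_left two_ne_zero
      rw [sub_eq_zero] at hN0
      exact hN0.symm
    rintro (hev | hmn)
    · exact hEvenCase hev
    by_cases he : Even τ
    · exact hEvenCase he
    obtain ⟨c, hc⟩ := Nat.not_even_iff_odd.mp he
    have hNU : (1 - U ^ τ) * U = -(1 - U ^ τ) := by
      have h1 := hNB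
      have h2 : U ^ τ = U ^ (2 * c) * U := by
        rw [hc, pow_succ]
      nth_rewrite 2 [h2] at h1
      rw [← mul_assoc, hNU2j c] at h1
      exact h1
    have hNQ : (1 - U ^ τ) * Q = 1 - U ^ τ := by
      rw [← hUP, ← mul_assoc, hNU, neg_mul, hNP, neg_neg]
    have h3 : U ^ (τ + 1) * P = Q - (1 - U ^ τ) := by
      calc U ^ (τ + 1) * P = U ^ τ * (U * P) := by rw [pow_succ, mul_assoc]
        _ = U ^ τ * Q := by rw [hUP]
        _ = Q - (1 - U ^ τ) * Q := by rw [sub_mul, one_mul, sub_sub_cancel]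
        _ = Q - (1 - U ^ τ) := by rw [hNQ]
    have h4 := htr he
    rw [h3, trace_sub, htrQ, htrP, hmn] at h4
    have h5 : trace (1 - U ^ τ) = 0 := by linear_combination -h4
    have hNH : (1 - U ^ τ)ᴴ = 1 - U ^ τ := by
      rw [conjTranspose_sub, conjTranspose_one, conjTranspose_pow, hUH, hB'B]
    have hNN : (1 - U ^ τ) * (1 - U ^ τ) = (1 - U ^ τ) + (1 - U ^ τ) := by
      rw [mul_sub, mul_one, sub_mul, one_mul, hB2]
      abel
    have h6 : trace ((1 - U ^ τ)ᴴ * (1 - U ^ τ)) = 0 := by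
      rw [hNH, hNN, trace_add, h5, add_zero]
    have hN0 := aux_trace_zero _ h6
    rw [sub_eq_zero] at hN0
    exact hN0.symm
  constructor
  · constructor
    · intro h1
      refine ⟨by rw [h1, Matrix.one_mul], ?_⟩
      by_cases he : Even τ
      · exact Or.inl he
      · right
        have h4 := htr he
        have h5 : U ^ (τ + 1) * P = Q := by rw [pow_succ, h1, one_mul, hUP]
        rw [h5, htrQ, htrP] at h4
        have hcast : (m : ℂ) = (n : ℂ) := by linear_combination (-1/2 : ℂ) * h4
        exact_mod_cast hcast
    · rintro ⟨hBV, hcase⟩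
      exact (core hBV).2 hcase
  · intro hBV
    rw [two_mul, pow_add]
    exact (core hBV).1
end

section
/- Let τ ≥ 1 be an odd integer and suppose U^τ V = V. Then every column of U^{(τ+1)/2} V lies in the column space of W; consequently m ≤ n. -/
open Matrix

theorem stmt_12 (k m n : ℕ) (hk : 0 < k) (hm : 0 < m) (hn : 0 < n)
    (V : Matrix (Fin k) (Fin m) ℂ) (W : Matrix (Fin k) (Fin n) ℂ)
    (hV : Vᴴ * V = 1) (hW : Wᴴ * W = 1)
    (U : Matrix (Fin k) (Fin k) ℂ)
    (hU : U = (2 • (W * Wᴴ) - 1) * (2 • (V * Vᴴ) - 1))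
    (τ : ℕ) (hτ : 1 ≤ τ) (hodd : Odd τ)
    (hUV : U ^ τ * V = V) :
    (∀ j : Fin m, ∃ c : Fin n → ℂ,
      W *ᵥ c = fun i => (U ^ ((τ + 1) / 2) * V) i j) ∧ m ≤ n := by
  set P : Matrix (Fin k) (Fin k) ℂ := 2 • (V * Vᴴ) - 1 with hP
  set Q : Matrix (Fin k) (Fin k) ℂ := 2 • (W * Wᴴ) - 1 with hQ
  have hMM : (V * Vᴴ) * (V * Vᴴ) = V * Vᴴ := by
    rw [Matrix.mul_assoc, ← Matrix.mul_assoc Vᴴ, hV, Matrix.one_mul]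
  have hNN : (W * Wᴴ) * (W * Wᴴ) = W * Wᴴ := by
    rw [Matrix.mul_assoc, ← Matrix.mul_assoc Wᴴ, hW, Matrix.one_mul]
  have hPV : P * V = V := by
    rw [hP, Matrix.sub_mul, Matrix.smul_mul, Matrix.one_mul, Matrix.mul_assoc, hV,
      Matrix.mul_one]
    abel
  have hPP : P * P = 1 := by
    have e : P * P = (V * Vᴴ) * (V * Vᴴ) + (V * Vᴴ) * (V * Vᴴ) + (V * Vᴴ) * (V * Vᴴ) +
        (V * Vᴴ) * (V * Vᴴ) - (V * Vᴴ) - (V * Vᴴ) - (V * Vᴴ) - (V * Vᴴ) + 1 := by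
      rw [hP, two_smul]
      noncomm_ring
    rw [e, hMM]
    abel
  have hQQ : Q * Q = 1 := by
    have e : Q * Q = (W * Wᴴ) * (W * Wᴴ) + (W * Wᴴ) * (W * Wᴴ) + (W * Wᴴ) * (W * Wᴴ) +
        (W * Wᴴ) * (W * Wᴴ) - (W * Wᴴ) - (W * Wᴴ) - (W * Wᴴ) - (W * Wᴴ) + 1 := by
      rw [hQ, two_smul]
      noncomm_ring
    rw [e, hNN]
    abel
  have hPH : Pᴴ = P := by
    rw [hP, conjTranspose_sub, conjTranspose_one, conjTranspose_nsmul, conjTranspose_mul,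
      conjTranspose_conjTranspose]
  have hQH : Qᴴ = Q := by
    rw [hQ, conjTranspose_sub, conjTranspose_one, conjTranspose_nsmul, conjTranspose_mul,
      conjTranspose_conjTranspose]
  have hUQP : U = Q * P := hU
  have hUinv1 : U * (P * Q) = 1 := by
    rw [hUQP]
    calc Q * P * (P * Q) = Q * (P * P) * Q := by noncomm_ring
    _ = 1 := by rw [hPP]; simp [hQQ]
  have hUinv2 : (P * Q) * U = 1 := by
    rw [hUQP]
    calc P * Q * (Q * P) = P * (Q * Q) * P := by noncomm_ring
    _ = 1 := by rw [hQQ]; simp [hPP]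
  have hUinvert : Invertible U := ⟨P * Q, hUinv2, hUinv1⟩
  have hUPU : U * P * U = P := by
    calc U * P * U = Q * (P * P) * (Q * P) := by rw [hUQP]; noncomm_ring
    _ = P := by rw [hPP, Matrix.mul_one, ← Matrix.mul_assoc, hQQ, Matrix.one_mul]
  have hkey : ∀ j : ℕ, U ^ j * P * U ^ j = P := by
    intro j
    induction j with
    | zero => simp
    | succ j ih =>
      calc U ^ (j + 1) * P * U ^ (j + 1) = (U ^ j * U) * P * (U * U ^ j) := by
            rw [← pow_succ, ← pow_succ']
      _ = U ^ j * (U * P * U) * U ^ j := by noncomm_ring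
      _ = P := by rw [hUPU, ih]
  obtain ⟨t, ht⟩ := hodd
  have hs : (τ + 1) / 2 = t + 1 := by omega
  set s := t + 1 with hsdef
  set A := U ^ s * V with hA
  have hQU : Q * U = P := by rw [hUQP, ← Matrix.mul_assoc, hQQ, Matrix.one_mul]
  have hQA : Q * A = A := by
    have hinvt : Invertible (U ^ t) := invertiblePow U t
    have h1 : U ^ t * (Q * A) = U ^ t * A := by
      have hl : U ^ t * (Q * A) = (U ^ t * P * U ^ t) * V := by
        rw [hA, hsdef, pow_succ', ← hQU]
        simp only [Matrix.mul_assoc]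
      have hr : U ^ t * A = V := by
        rw [hA, ← Matrix.mul_assoc, ← pow_add]
        have : t + s = τ := by omega
        rw [this, hUV]
      rw [hl, hkey, hPV, hr]
    calc Q * A = (U ^ t)⁻¹ * (U ^ t * (Q * A)) := by
          rw [Matrix.inv_mul_cancel_left_of_invertible]
    _ = (U ^ t)⁻¹ * (U ^ t * A) := by rw [h1]
    _ = A := by rw [Matrix.inv_mul_cancel_left_of_invertible]
  have hWA : W * (Wᴴ * A) = A := by
    have h2 : 2 • (W * (Wᴴ * A)) - A = A := by
      calc 2 • (W * (Wᴴ * A)) - A = Q * A := by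
            rw [hQ, Matrix.sub_mul, Matrix.smul_mul, Matrix.one_mul, Matrix.mul_assoc]
      _ = A := hQA
    have h3 : 2 • (W * (Wᴴ * A)) = 2 • A := by
      rw [eq_add_of_sub_eq h2, two_smul]
    have h4 : ((2 : ℕ) : ℂ) • (W * (Wᴴ * A)) = ((2 : ℕ) : ℂ) • A := by
      rw [Nat.cast_smul_eq_nsmul, Nat.cast_smul_eq_nsmul]; exact h3
    have h5 : ((2 : ℕ) : ℂ) ≠ 0 := by norm_num
    exact smul_right_injective _ h5 h4
  constructor
  · intro j
    refine ⟨fun x => (Wᴴ * A) x j, ?_⟩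
    funext i
    have := congrFun (congrFun hWA i) j
    rw [hs]
    simp only [← hA]
    rw [← this]
    simp [Matrix.mulVec, Matrix.mul_apply, dotProduct]
  · have hUH : Uᴴ * U = 1 := by
      rw [hUQP, conjTranspose_mul, hPH, hQH]
      calc P * Q * (Q * P) = P * (Q * Q) * P := by noncomm_ring
      _ = 1 := by rw [hQQ]; simp [hPP]
    have hUsH : ∀ j : ℕ, (U ^ j)ᴴ * U ^ j = 1 := by
      intro j
      induction j with
      | zero => simp
      | succ j ih =>
        rw [pow_succ', conjTranspose_mul]
        calc (U ^ j)ᴴ * Uᴴ * (U * U ^ j) = (U ^ j)ᴴ * (Uᴴ * U) * U ^ j := by noncomm_ring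
        _ = 1 := by rw [hUH]; simpa using ih
    have hAA : Aᴴ * A = 1 := by
      rw [hA, conjTranspose_mul, Matrix.mul_assoc, ← Matrix.mul_assoc (U ^ s)ᴴ, hUsH,
        Matrix.one_mul, hV]
    set B := Wᴴ * A with hB
    have hBB : Bᴴ * B = 1 := by
      rw [hB, conjTranspose_mul, conjTranspose_conjTranspose, Matrix.mul_assoc,
        ← Matrix.mul_assoc W, Matrix.mul_assoc W Wᴴ A, hWA, hAA]
    have h1 : m = (1 : Matrix (Fin m) (Fin m) ℂ).rank := by
      rw [Matrix.rank_one, Fintype.card_fin]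
    have h2 : (Bᴴ * B).rank ≤ B.rank := Matrix.rank_mul_le_right _ _
    rw [hBB] at h2
    have h3 : B.rank ≤ n := Matrix.rank_le_height B
    omega
end

section
/- Suppose π is a fixed-point-free involution of the index set {1,…,n}, and let τ be the least positive integer such that U^τ (V e_u) = V e_{π(u)} for every u (assuming such τ exists). Then τ ≤ (1/2)·(8·(min(n,f))²)!. -/
/-!
Put `M = VᵀWWᵀV`. If `M w = μ w`, then `U` preserves the span of `V w` and `WWᵀV w`, and
`(U + 1)² - 4μU` kills `V w`. Hence `U` annihilates the columns of `V` through
`det ((X + 1)² - 4XM) = ∏ⱼ ((X + 1)² - 4μⱼX)`, a polynomial with rational coefficients.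
Zero eigenvalues only contribute factors `(X + 1)²`, and at most `r = min n f` eigenvalues are
nonzero, so a cyclotomic factor `Φ_d` of it has `d ≤ 2` or `φ(d) ≤ 2r`; as `d ≤ 2φ(d)²`, in
either case `d ∣ F = (8r²)!`. Since `U^(2τ) V = V`, each cyclotomic factor of `X^(2τ) - 1`
divides `X^F - 1` or is coprime to the annihilating polynomial, so `U^F V = V`. Minimality of
`τ` and fixed-point-freeness of `π` make `2τ` the exact period of `V` under `A ↦ U A`, whence
`2τ ∣ F`.
-/

open Matrix Polynomial Function

namespace Nat

theorem prime_pow_le_totient_sq {p : ℕ} (hp : p.Prime) (hp2 : p ≠ 2) (k : ℕ) :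
    p ^ k ≤ totient (p ^ k) ^ 2 := by
  rcases k with _ | j
  · simp
  have hp3 : 3 ≤ p := lt_of_le_of_ne hp.two_le (Ne.symm hp2)
  have hp_sq : p ≤ (p - 1) ^ 2 := by
    obtain ⟨q, rfl⟩ : ∃ q, p = q + 3 := ⟨p - 3, by omega⟩
    rw [show q + 3 - 1 = q + 2 by omega]
    nlinarith
  rw [totient_prime_pow_succ hp]
  calc p ^ (j + 1) = p ^ j * p := pow_succ _ _
    _ ≤ (p ^ j) ^ 2 * (p - 1) ^ 2 := Nat.mul_le_mul (Nat.le_self_pow two_ne_zero _) hp_sq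
    _ = (p ^ j * (p - 1)) ^ 2 := (mul_pow _ _ _).symm

theorem two_pow_le_two_mul_totient_sq (k : ℕ) : 2 ^ k ≤ 2 * totient (2 ^ k) ^ 2 := by
  rcases k with _ | j
  · simp
  rw [totient_prime_pow_succ prime_two, pow_succ']
  simpa using Nat.mul_le_mul_left 2 (Nat.le_self_pow two_ne_zero (2 ^ j))

theorem le_totient_sq_of_odd {d : ℕ} (hd : Odd d) : d ≤ totient d ^ 2 := by
  induction d using recOnPosPrimePosCoprime with
  | prime_pow p k hp hk =>
    refine prime_pow_le_totient_sq hp ?_ k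
    rintro rfl
    exact (Nat.not_even_iff_odd.2 hd) ((Nat.even_pow' hk.ne').2 even_two)
  | zero => simp at hd
  | one => simp
  | coprime a b _ _ hab iha ihb =>
    rw [Nat.odd_mul] at hd
    rw [totient_mul hab, mul_pow]
    exact Nat.mul_le_mul (iha hd.1) (ihb hd.2)

theorem le_two_mul_totient_sq (d : ℕ) : d ≤ 2 * totient d ^ 2 := by
  rcases eq_or_ne d 0 with rfl | hd
  · simp
  obtain ⟨k, b, hb, rfl⟩ := exists_eq_two_pow_mul_odd hd
  have hcop : Coprime (2 ^ k) b := (Nat.coprime_two_left.2 hb).pow_left k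
  rw [totient_mul hcop, mul_pow, ← mul_assoc]
  exact Nat.mul_le_mul (two_pow_le_two_mul_totient_sq k) (le_totient_sq_of_odd hb)

end Nat

namespace Polynomial

theorem le_two_mul_natDegree_sq_of_cyclotomic_dvd {K : Type*} [Field K] {d : ℕ} {q : K[X]}
    (hq : q ≠ 0) (h : cyclotomic d K ∣ q) : d ≤ 2 * q.natDegree ^ 2 := by
  have hdeg := natDegree_le_of_dvd h hq
  rw [natDegree_cyclotomic] at hdeg
  calc d ≤ 2 * d.totient ^ 2 := d.le_two_mul_totient_sq
    _ ≤ 2 * q.natDegree ^ 2 := by gcongr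

theorem le_of_cyclotomic_dvd_X_add_one_pow_mul {d e : ℕ} {q : ℚ[X]} (hq : q ≠ 0)
    (h : cyclotomic d ℚ ∣ (X + 1) ^ e * q) : d ≤ max 2 (2 * q.natDegree ^ 2) := by
  rcases d.eq_zero_or_pos with rfl | hd
  · exact Nat.zero_le _
  have hprime : Prime (cyclotomic d ℚ) := (cyclotomic.irreducible_rat hd).prime
  rcases hprime.dvd_or_dvd h with h1 | h1
  · have h2 := le_two_mul_natDegree_sq_of_cyclotomic_dvd (X_add_C_ne_zero 1)
      (hprime.dvd_of_dvd_pow (C_1 (R := ℚ) ▸ h1))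
    rw [natDegree_X_add_C] at h2
    exact le_max_of_le_left h2
  · exact le_max_of_le_right (le_two_mul_natDegree_sq_of_cyclotomic_dvd hq h1)

theorem X_pow_sub_one_mem_span_pair {N F : ℕ} (hN : 0 < N) (hF : 0 < F) {q : ℚ[X]}
    (h : ∀ d ∈ N.divisors, cyclotomic d ℚ ∣ q → d ∣ F) :
    X ^ F - 1 ∈ Ideal.span {X ^ N - 1, q} := by
  classical
  set good := ∏ d ∈ N.divisors with d ∣ F, cyclotomic d ℚ
  set bad := ∏ d ∈ N.divisors with ¬ d ∣ F, cyclotomic d ℚ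
  have hsplit : X ^ N - 1 = good * bad := by
    rw [Finset.prod_filter_mul_prod_filter_not, prod_cyclotomic_eq_X_pow_sub_one hN]
  obtain ⟨c, hc⟩ : good ∣ X ^ F - 1 := by
    rw [← prod_cyclotomic_eq_X_pow_sub_one hF]
    refine Finset.prod_dvd_prod_of_subset _ _ _ fun d hd => ?_
    rw [Finset.mem_filter, Nat.mem_divisors] at hd
    exact Nat.mem_divisors.2 ⟨hd.2, hF.ne'⟩
  obtain ⟨a, b, hab⟩ : IsCoprime bad q := IsCoprime.prod_left fun d hd => by
    rw [Finset.mem_filter] at hd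
    exact (cyclotomic.irreducible_rat (Nat.pos_of_mem_divisors hd.1)).coprime_iff_not_dvd.2
      fun hdq => hd.2 (h d hd.1 hdq)
  exact Ideal.mem_span_pair.2
    ⟨c * a, good * c * b, by linear_combination (c * a) * hsplit + (good * c) * hab - hc⟩

theorem exists_eq_mul_of_map_eq_map_mul {K L : Type*} [Field K] [Field L] (f : K →+* L)
    {p q : K[X]} {Q : L[X]} (hp : p.Monic) (h : q.map f = p.map f * Q) :
    ∃ q₀, q = p * q₀ ∧ q₀.map f = Q := by
  obtain ⟨q₀, rfl⟩ := (map_dvd_map f f.injective hp).1 ⟨Q, h⟩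
  rw [Polynomial.map_mul] at h
  exact ⟨q₀, rfl, mul_left_cancel₀ (hp.map f).ne_zero h⟩

end Polynomial

theorem Function.minimalPeriod_eq_two_mul {α : Type*} {f : α → α} {x : α} {τ : ℕ}
    (hback : f^[τ] (f^[τ] x) = x) (hne : f^[τ] x ≠ x)
    (hleast : ∀ t, 0 < t → f^[t] x = f^[τ] x → τ ≤ t) :
    minimalPeriod f x = 2 * τ := by
  have hτ : 0 < τ := Nat.pos_of_ne_zero fun h => hne (by simp [h])
  have hper : IsPeriodicPt f (2 * τ) x := by
    rw [IsPeriodicPt, IsFixedPt, two_mul, iterate_add_apply, hback]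
  set p := minimalPeriod f x
  have hp : 0 < p := hper.minimalPeriod_pos (by omega)
  have hτp : τ ≤ p := by
    by_contra! hlt
    refine absurd (hleast (τ - p) (by omega) ?_) (by omega)
    calc f^[τ - p] x = f^[τ - p] (f^[p] x) := by rw [iterate_minimalPeriod]
      _ = f^[τ] x := by rw [← iterate_add_apply, Nat.sub_add_cancel hlt.le]
  have hpτ : p ≠ τ := fun h => hne (h ▸ iterate_minimalPeriod)
  obtain ⟨c, hc⟩ := hper.minimalPeriod_dvd
  have hc2 : c ≤ 2 := by nlinarith
  interval_cases c <;> omega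

namespace Matrix

section

variable {n : Type*} [Fintype n] [DecidableEq n]

theorem IsHermitian.eq_zero_of_mulVec_eigenvectorBasis {𝕜 : Type*} [RCLike 𝕜] {m : Type*}
    {M : Matrix n n 𝕜} (hM : M.IsHermitian) {A : Matrix m n 𝕜}
    (hA : ∀ j, A *ᵥ ⇑(hM.eigenvectorBasis j) = 0) : A = 0 := by
  set E : Matrix n n 𝕜 := ↑hM.eigenvectorUnitary
  have hAE : A * E = 0 := ext_of_mulVec_single fun j => by
    rw [← mulVec_mulVec, eigenvectorUnitary_mulVec, hA, zero_mulVec]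
  calc A = A * (E * star E) := by
        rw [Unitary.mul_star_self_of_mem hM.eigenvectorUnitary.2, Matrix.mul_one]
    _ = 0 := by rw [← Matrix.mul_assoc, hAE, Matrix.zero_mul]

theorem IsHermitian.det_smul_one_sub_smul_map {M : Matrix n n ℝ} (hM : M.IsHermitian)
    {S : Type*} [CommRing S] [Algebra ℝ S] (a b : S) :
    det (a • 1 - b • M.map (algebraMap ℝ S)) =
      ∏ i, (a - b * algebraMap ℝ S (hM.eigenvalues i)) := by
  set φ := (algebraMap ℝ S).mapMatrix (m := n)
  set E : Matrix n n ℝ := ↑hM.eigenvectorUnitary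
  have hE : φ E * φ (star E) = 1 := by
    rw [← map_mul, Unitary.mul_star_self_of_mem hM.eigenvectorUnitary.2, map_one]
  have hE' : φ (star E) * φ E = 1 := by
    rw [← map_mul, Unitary.star_mul_self_of_mem hM.eigenvectorUnitary.2, map_one]
  set D := diagonal fun i => algebraMap ℝ S (hM.eigenvalues i)
  have hM' : M.map (algebraMap ℝ S) = φ E * D * φ (star E) := by
    conv_lhs => rw [hM.spectral_theorem, Unitary.conjStarAlgAut_apply]
    simp [φ, E, D]
  have hdiag :
      (diagonal fun i => a - b * algebraMap ℝ S (hM.eigenvalues i)) = a • 1 - b • D := by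
    ext i j
    by_cases h : i = j <;> simp [D, h]
  have hconj : a • 1 - b • M.map (algebraMap ℝ S) =
      φ E * diagonal (fun i => a - b * algebraMap ℝ S (hM.eigenvalues i)) * φ (star E) := by
    rw [hM', hdiag, Matrix.mul_sub, Matrix.sub_mul, Matrix.mul_smul, Matrix.smul_mul,
      Matrix.mul_one, hE, Matrix.mul_smul, Matrix.smul_mul, Matrix.mul_assoc]
  rw [hconj, det_conj_of_mul_eq_one hE hE', det_diagonal]

variable {R : Type*} [CommRing R]

theorem aeval_reflection_mul_reflection_mulVec_eq_zero {P Q : Matrix n n R} (hQ : Q * Q = Q)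
    {x : n → R} (hx : P *ᵥ x = x) {μ : R} (hμ : P *ᵥ (Q *ᵥ x) = μ • x) :
    aeval ((2 • Q - 1) * (2 • P - 1)) ((X + 1) ^ 2 - C (4 * μ) * X) *ᵥ x = 0 := by
  set U := (2 • Q - 1) * (2 • P - 1)
  -- with `y = Q x`: `(U + 1) x = 2y` and `(U + 1) y = 2μ U x`, so `(U + 1)² x = 4μ U x`
  have hQQ : Q *ᵥ (Q *ᵥ x) = Q *ᵥ x := by rw [mulVec_mulVec, hQ]
  have hUx : U *ᵥ x = 2 • (Q *ᵥ x) - x := by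
    simp only [U, two_smul, ← mulVec_mulVec, add_mulVec, sub_mulVec, one_mulVec, hx, mulVec_add,
      mulVec_sub]
    abel
  have hUy : U *ᵥ (Q *ᵥ x) + Q *ᵥ x = (2 * μ) • (2 • (Q *ᵥ x) - x) := by
    simp only [U, two_smul, ← mulVec_mulVec, add_mulVec, sub_mulVec, one_mulVec, hμ, hQQ,
      mulVec_add, mulVec_sub, mulVec_smul]
    module
  have haeval : aeval U ((X + 1) ^ 2 - C (4 * μ) * X) = (U + 1) * (U + 1) - (4 * μ) • U := by
    simp [sq, ← Algebra.smul_def, smul_smul]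
  rw [haeval, sub_mulVec, ← mulVec_mulVec, add_mulVec U 1 x, hUx, one_mulVec, smul_mulVec, hUx,
    sub_add_cancel, mulVec_smul, add_mulVec, one_mulVec, hUy]
  module

/-- For `M = VᵀWWᵀV`, the characteristic polynomial of `(2WWᵀ - 1)(2VVᵀ - 1)` acting on the
columns of `V` and `WWᵀV`. -/
noncomputable def reflectionCharpoly (M : Matrix n n R) : R[X] :=
  det ((X + 1 : R[X]) ^ 2 • (1 : Matrix n n R[X]) - (4 * X : R[X]) • M.map C)

theorem reflectionCharpoly_map {S : Type*} [CommRing S] (f : R →+* S) (M : Matrix n n R) :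
    (reflectionCharpoly M).map f = reflectionCharpoly (M.map f) := by
  rw [reflectionCharpoly, reflectionCharpoly, ← coe_mapRingHom, RingHom.map_det]
  congr 1
  ext i j
  by_cases h : i = j <;> simp [h]

theorem IsHermitian.reflectionCharpoly_eq_prod {M : Matrix n n ℝ} (hM : M.IsHermitian) :
    reflectionCharpoly M = ∏ j, ((X + 1) ^ 2 - C (4 * hM.eigenvalues j) * X) := by
  rw [reflectionCharpoly, ← algebraMap_eq (R := ℝ), hM.det_smul_one_sub_smul_map]
  refine Finset.prod_congr rfl fun j _ => ?_
  rw [algebraMap_eq, C_mul, C_ofNat]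
  ring

theorem IsHermitian.reflectionCharpoly_eq_X_add_one_pow_mul {M : Matrix n n ℝ}
    (hM : M.IsHermitian) :
    ∃ e Q, Q.Monic ∧ Q.natDegree = 2 * M.rank ∧ reflectionCharpoly M = (X + 1) ^ e * Q := by
  have hmonic : ∀ c : ℝ, ((X + 1) ^ 2 - C c * X).Monic := fun c => by monicity!
  have hdeg : ∀ c : ℝ, ((X + 1) ^ 2 - C c * X).natDegree = 2 := fun c => by compute_degree!
  refine ⟨2 * (Finset.univ.filter fun j => hM.eigenvalues j = 0).card,
    ∏ j ∈ Finset.univ.filter fun j => hM.eigenvalues j ≠ 0,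
      ((X + 1) ^ 2 - C (4 * hM.eigenvalues j) * X),
    monic_prod_of_monic _ _ fun j _ => hmonic _, ?_, ?_⟩
  · rw [natDegree_prod_of_monic _ _ fun j _ => hmonic _, Finset.sum_congr rfl fun j _ => hdeg _,
      Finset.sum_const, smul_eq_mul, mul_comm, hM.rank_eq_card_non_zero_eigs, Fintype.card_subtype]
  · rw [hM.reflectionCharpoly_eq_prod,
      ← Finset.prod_filter_mul_prod_filter_not Finset.univ fun j => hM.eigenvalues j = 0]
    congr 1
    rw [pow_mul, ← Finset.prod_const]
    refine Finset.prod_congr rfl fun j hj => ?_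
    simp [(Finset.mem_filter.1 hj).2]

end

theorem iterate_mul_left_apply {R m n : Type*} [Semiring R] [Fintype m] [DecidableEq m]
    (U : Matrix m m R) (A : Matrix m n R) (t : ℕ) : (U * ·)^[t] A = U ^ t * A := by
  induction t with
  | zero => simp
  | succ t ih => rw [iterate_succ_apply', ih, pow_succ', Matrix.mul_assoc]

theorem pow_mul_eq_self_of_mem_span_pair {R m n : Type*} [CommRing R] [Algebra ℚ R] [Fintype m]
    [DecidableEq m] {U : Matrix m m R} {V : Matrix m n R}
    {q : ℚ[X]} {N F : ℕ} (hN : U ^ N * V = V) (hq : aeval U q * V = 0)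
    (hF : X ^ F - 1 ∈ Ideal.span {X ^ N - 1, q}) : U ^ F * V = V := by
  obtain ⟨A, B, hAB⟩ := Ideal.mem_span_pair.1 hF
  have h := congrArg (fun r => aeval U r * V) hAB
  simp only [map_add, map_mul, map_sub, map_pow, aeval_X, map_one, Matrix.add_mul,
    Matrix.mul_assoc, Matrix.sub_mul, Matrix.one_mul, hN, sub_self, hq, Matrix.mul_zero,
    add_zero] at h
  exact sub_eq_zero.1 h.symm

theorem minimalPeriod_mul_left_eq_two_mul {m n : Type*} [Fintype m] [DecidableEq m] [Fintype n]
    [DecidableEq n] [Nonempty n] {U : Matrix m m ℝ} {V : Matrix m n ℝ} (hV : Vᵀ * V = 1)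
    {π : n → n} (hinv : ∀ u, π (π u) = u) (hfpf : ∀ u, π u ≠ u) {τ : ℕ}
    (hτ : ∀ u, U ^ τ *ᵥ (V *ᵥ Pi.single u 1) = V *ᵥ Pi.single (π u) 1)
    (hleast : ∀ t, 0 < t →
      (∀ u, U ^ t *ᵥ (V *ᵥ Pi.single u 1) = V *ᵥ Pi.single (π u) 1) → τ ≤ t) :
    minimalPeriod (U * ·) V = 2 * τ := by
  simp only [mulVec_mulVec] at hτ hleast
  refine minimalPeriod_eq_two_mul ?_ ?_ fun t ht h => hleast t ht fun u => ?_
  · rw [iterate_mul_left_apply, iterate_mul_left_apply]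
    exact ext_of_mulVec_single fun u => by rw [← mulVec_mulVec, hτ, mulVec_mulVec, hτ, hinv]
  · intro h
    obtain ⟨u⟩ := ‹Nonempty n›
    have hcol := congrArg (Vᵀ *ᵥ ·) (hτ u)
    rw [iterate_mul_left_apply] at h
    simp only [h, mulVec_mulVec, hV, one_mulVec] at hcol
    exact hfpf u (by simpa [Pi.single_apply, eq_comm] using congrFun hcol u)
  · rw [iterate_mul_left_apply, iterate_mul_left_apply] at h
    rw [h, hτ]

theorem isHermitian_transpose_mul_mul_transpose_mul {m n p : Type*} [Fintype m] [Fintype p]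
    (V : Matrix m n ℝ) (W : Matrix m p ℝ) :
    (Vᵀ * W * Wᵀ * V).IsHermitian := by
  simpa [Matrix.mul_assoc, conjTranspose_eq_transpose_of_trivial] using
    isHermitian_conjTranspose_mul_self (Wᵀ * V)

theorem rank_transpose_mul_mul_transpose_mul_le {m n p : Type*} [Fintype m] [Fintype n]
    [Fintype p] (V : Matrix m n ℝ) (W : Matrix m p ℝ) :
    (Vᵀ * W * Wᵀ * V).rank ≤ min (Fintype.card n) (Fintype.card p) :=
  le_min (rank_le_card_width _) <| (rank_mul_le_left _ _).trans <|
    (rank_mul_le_left _ _).trans (rank_le_card_width _)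

section Reflections

variable {m n p : Type*} [Fintype m] [Fintype n] [Fintype p] [DecidableEq m] [DecidableEq n]
  [DecidableEq p]

theorem aeval_reflection_mul_reflection_mulVec_eigenvector_eq_zero {V : Matrix m n ℝ}
    {W : Matrix m p ℝ} (hV : Vᵀ * V = 1) (hW : Wᵀ * W = 1) {w : n → ℝ} {μ : ℝ}
    (hw : (Vᵀ * W * Wᵀ * V) *ᵥ w = μ • w) :
    aeval ((2 • (W * Wᵀ) - 1) * (2 • (V * Vᵀ) - 1)) ((X + 1) ^ 2 - C (4 * μ) * X) *ᵥ (V *ᵥ w) =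
      0 := by
  refine aeval_reflection_mul_reflection_mulVec_eq_zero ?_ ?_ ?_
  · rw [Matrix.mul_assoc, ← Matrix.mul_assoc Wᵀ, hW, Matrix.one_mul]
  · rw [mulVec_mulVec, Matrix.mul_assoc, hV, Matrix.mul_one]
  · rw [← mulVec_smul, ← hw, mulVec_mulVec, mulVec_mulVec, mulVec_mulVec]
    simp only [Matrix.mul_assoc]

theorem aeval_reflectionCharpoly_mul_eq_zero {V : Matrix m n ℝ} {W : Matrix m p ℝ}
    (hV : Vᵀ * V = 1) (hW : Wᵀ * W = 1) :
    aeval ((2 • (W * Wᵀ) - 1) * (2 • (V * Vᵀ) - 1)) (reflectionCharpoly (Vᵀ * W * Wᵀ * V)) * V =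
      0 := by
  have hM := isHermitian_transpose_mul_mul_transpose_mul V W
  rw [hM.reflectionCharpoly_eq_prod]
  refine hM.eq_zero_of_mulVec_eigenvectorBasis fun j => ?_
  rw [← mulVec_mulVec, ← Finset.prod_erase_mul _ _ (Finset.mem_univ j), map_mul, ← mulVec_mulVec,
    aeval_reflection_mul_reflection_mulVec_eigenvector_eq_zero hV hW
      (hM.mulVec_eigenvectorBasis j), mulVec_zero]

theorem exists_rat_annihilator {V : Matrix m n ℝ} {W : Matrix m p ℝ} (hV : Vᵀ * V = 1)
    (hW : Wᵀ * W = 1) (hrat : ∀ i j, ∃ q : ℚ, (Vᵀ * W * Wᵀ * V) i j = q) :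
    ∃ q : ℚ[X], aeval ((2 • (W * Wᵀ) - 1) * (2 • (V * Vᵀ) - 1)) q * V = 0 ∧
      ∀ d, cyclotomic d ℚ ∣ q → d ≤ max 2 (8 * min (Fintype.card n) (Fintype.card p) ^ 2) := by
  have hM := isHermitian_transpose_mul_mul_transpose_mul V W
  obtain ⟨Mq, hMq⟩ : ∃ Mq : Matrix n n ℚ, Mq.map (algebraMap ℚ ℝ) = Vᵀ * W * Wᵀ * V :=
    ⟨of fun i j => (hrat i j).choose, by ext i j; simpa using ((hrat i j).choose_spec).symm⟩
  obtain ⟨e, Q, hQ, hQdeg, hfac⟩ := hM.reflectionCharpoly_eq_X_add_one_pow_mul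
  have hmap : (reflectionCharpoly Mq).map (algebraMap ℚ ℝ) =
      ((X + C 1 : ℚ[X]) ^ e).map (algebraMap ℚ ℝ) * Q := by
    rw [reflectionCharpoly_map, hMq, hfac]
    simp
  obtain ⟨q₀, hq, hq₀⟩ := exists_eq_mul_of_map_eq_map_mul _ ((monic_X_add_C 1).pow e) hmap
  refine ⟨reflectionCharpoly Mq, ?_, fun d hd => ?_⟩
  · rw [← aeval_map_algebraMap ℝ, reflectionCharpoly_map, hMq]
    exact aeval_reflectionCharpoly_mul_eq_zero hV hW
  have hq₀ne : q₀ ≠ 0 := by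
    rintro rfl
    exact hQ.ne_zero (by simpa using hq₀.symm)
  have hdeg : q₀.natDegree ≤ 2 * min (Fintype.card n) (Fintype.card p) := by
    rw [← natDegree_map (algebraMap ℚ ℝ), hq₀, hQdeg]
    have := rank_transpose_mul_mul_transpose_mul_le V W
    omega
  rw [hq, C_1] at hd
  calc d ≤ max 2 (2 * q₀.natDegree ^ 2) := le_of_cyclotomic_dvd_X_add_one_pow_mul hq₀ne hd
    _ ≤ max 2 (8 * min (Fintype.card n) (Fintype.card p) ^ 2) :=
      max_le_max le_rfl (by nlinarith)

end Reflections

end Matrix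

theorem stmt_14_general (k n f : ℕ) (hn : 0 < n) (hf : 0 < f)
    (V : Matrix (Fin k) (Fin n) ℝ) (W : Matrix (Fin k) (Fin f) ℝ)
    (hV : Vᵀ * V = 1) (hW : Wᵀ * W = 1)
    (U : Matrix (Fin k) (Fin k) ℝ)
    (hU : U = (2 • (W * Wᵀ) - 1) * (2 • (V * Vᵀ) - 1))
    (hrat : ∀ i j : Fin n, ∃ q : ℚ, (Vᵀ * W * Wᵀ * V) i j = (q : ℝ))
    (π : Fin n → Fin n) (hinv : ∀ u, π (π u) = u) (hfpf : ∀ u, π u ≠ u)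
    (τ : ℕ) (hτpos : 0 < τ)
    (hPST : ∀ u : Fin n,
      (U ^ τ) *ᵥ (V *ᵥ Pi.single u 1) = V *ᵥ Pi.single (π u) 1)
    (hleast : ∀ t : ℕ, 0 < t →
      (∀ u : Fin n, (U ^ t) *ᵥ (V *ᵥ Pi.single u 1) = V *ᵥ Pi.single (π u) 1) →
      τ ≤ t) :
    (τ : ℝ) ≤ (1 / 2 : ℝ) * (Nat.factorial (8 * (min n f) ^ 2)) := by
  have : Nonempty (Fin n) := ⟨⟨0, hn⟩⟩
  have hper := minimalPeriod_mul_left_eq_two_mul hV hinv hfpf hPST hleast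
  obtain ⟨q, hqU, hqcyc⟩ := exists_rat_annihilator hV hW hrat
  rw [← hU] at hqU
  simp only [Fintype.card_fin] at hqcyc
  have h2τ : U ^ (2 * τ) * V = V := by
    rw [← iterate_mul_left_apply, ← hper, iterate_minimalPeriod]
  have hF : U ^ (8 * min n f ^ 2).factorial * V = V := by
    refine pow_mul_eq_self_of_mem_span_pair h2τ hqU (X_pow_sub_one_mem_span_pair (by omega)
      (Nat.factorial_pos _) fun d hd hdq => Nat.dvd_factorial (Nat.pos_of_mem_divisors hd) ?_)
    have : 1 ≤ min n f := le_min hn hf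
    exact (hqcyc d hdq).trans (max_le (by nlinarith) le_rfl)
  have hdvd : 2 * τ ∣ (8 * min n f ^ 2).factorial := by
    rw [← hper]
    exact IsPeriodicPt.minimalPeriod_dvd <| by
      rw [IsPeriodicPt, IsFixedPt, iterate_mul_left_apply, hF]
  have hle : (2 * τ : ℝ) ≤ (8 * min n f ^ 2).factorial := by
    exact_mod_cast Nat.le_of_dvd (Nat.factorial_pos _) hdvd
  linarith

theorem stmt_14 (k n f : ℕ) (hk : 0 < k) (hn : 0 < n) (hf : 0 < f)
    (V : Matrix (Fin k) (Fin n) ℝ) (W : Matrix (Fin k) (Fin f) ℝ)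
    (hV : Vᵀ * V = 1) (hW : Wᵀ * W = 1)
    (U : Matrix (Fin k) (Fin k) ℝ)
    (hU : U = (2 • (W * Wᵀ) - 1) * (2 • (V * Vᵀ) - 1))
    (hrat : ∀ i j : Fin n, ∃ q : ℚ, (Vᵀ * W * Wᵀ * V) i j = (q : ℝ))
    (π : Fin n → Fin n) (hinv : ∀ u, π (π u) = u) (hfpf : ∀ u, π u ≠ u)
    (τ : ℕ) (hτpos : 0 < τ)
    (hPST : ∀ u : Fin n,
      (U ^ τ) *ᵥ (V *ᵥ Pi.single u 1) = V *ᵥ Pi.single (π u) 1)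
    (hleast : ∀ t : ℕ, 0 < t →
      (∀ u : Fin n, (U ^ t) *ᵥ (V *ᵥ Pi.single u 1) = V *ᵥ Pi.single (π u) 1) →
      τ ≤ t) :
    (τ : ℝ) ≤ (1 / 2 : ℝ) * (Nat.factorial (8 * (min n f) ^ 2)) :=
  stmt_14_general k n f hn hf V W hV hW U hU hrat π hinv hfpf τ hτpos hPST hleast
end

section
/- U² = I if and only if PQ = (1/a)·J, where J is the all-ones A×A matrix. -/
open Matrix

/-! `2P - 1` and `2Q - 1` are involutions, so their product squares to `1` exactly when they
commute, i.e. when `P` and `Q` commute. Then every column of `PQ` lies in the intersection of the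
ranges, so is constant; as `PQ` is also symmetric, all its entries are equal, and `PQ 𝟙 = 𝟙` forces
the common value `1/a`. Conversely `J` is symmetric, so `PQ = (PQ)ᵀ = QP`. -/

theorem mul_sq_eq_one_iff_commute {M : Type*} [Monoid M] {s t : M}
    (hs : s * s = 1) (ht : t * t = 1) : (s * t) ^ 2 = 1 ↔ Commute s t := by
  rw [sq]
  constructor
  · intro h
    calc s * t = s * (s * t * (s * t)) * t := by rw [h, mul_one]
      _ = (s * s) * (t * s) * (t * t) := by simp only [mul_assoc]
      _ = t * s := by rw [hs, ht, one_mul, mul_one]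
  · intro h
    calc s * t * (s * t) = s * (t * s) * t := by simp only [mul_assoc]
      _ = (s * s) * (t * t) := by rw [← h.eq]; simp only [mul_assoc]
      _ = 1 := by rw [hs, ht, one_mul]

theorem commute_two_nsmul_sub_one_iff {R : Type*} [Ring R] [IsAddTorsionFree R] {p q : R} :
    Commute (2 • p - 1) (2 • q - 1) ↔ Commute p q := by
  have key : (2 • p - 1) * (2 • q - 1) - (2 • q - 1) * (2 • p - 1) = 4 • (p * q - q * p) := by
    noncomm_ring
  rw [commute_iff_eq, commute_iff_eq, ← sub_eq_zero, key, ← sub_eq_zero (a := p * q),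
    smul_eq_zero_iff_right four_ne_zero]

section Matrix

variable {n K : Type*} [Fintype n]

theorem Matrix.mulVec_eq_self_of_exists_mulVec_eq [Semiring K] {P : Matrix n n K}
    (hP : P * P = P) {x : n → K} (hx : ∃ y, P *ᵥ y = x) : P *ᵥ x = x := by
  obtain ⟨y, rfl⟩ := hx
  rw [mulVec_mulVec, hP]

theorem Matrix.apply_eq_of_forall_mulVec_const [DecidableEq n] [Semiring K] {M : Matrix n n K}
    (hM : ∀ v, ∃ c : K, M *ᵥ v = fun _ => c) (i i' j : n) : M i j = M i' j := by
  obtain ⟨c, hc⟩ := hM (Pi.single j 1)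
  rw [mulVec_single_one] at hc
  exact (congrFun hc i).trans (congrFun hc i').symm

theorem Matrix.eq_inv_card_smul_of_forall_mulVec_const [DecidableEq n] [DivisionRing K]
    {M : Matrix n n K} (hMsymm : Mᵀ = M) (hM : ∀ v, ∃ c : K, M *ᵥ v = fun _ => c)
    (hone : M *ᵥ (fun _ => 1) = fun _ => 1) :
    M = (Fintype.card n : K)⁻¹ • Matrix.of fun _ _ => 1 := by
  have hcol := apply_eq_of_forall_mulVec_const hM
  have hsymm (i j : n) : M i j = M j i := by rw [← transpose_apply M j i, hMsymm]
  have hconst (i j k : n) : M i j = M i k := by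
    rw [hcol i k j, hsymm k j, hcol j i k, hsymm i k]
  ext i j
  have hrow : ∑ k, M i k = 1 := by simpa [mulVec, dotProduct] using congrFun hone i
  rw [Finset.sum_congr rfl fun k _ => (hconst i j k).symm, Finset.sum_const, Finset.card_univ,
    nsmul_eq_mul] at hrow
  rw [smul_apply, of_apply, smul_eq_mul, mul_one]
  exact eq_inv_of_mul_eq_one_right hrow

end Matrix

theorem stmt_15_general (A : Type*) [Fintype A] [DecidableEq A]
    (P Q : Matrix A A ℝ)
    (hPsymm : Pᵀ = P) (hPidem : P * P = P)
    (hQsymm : Qᵀ = Q) (hQidem : Q * Q = Q)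
    (hinter : ∀ x : A → ℝ,
      ((∃ y : A → ℝ, P *ᵥ y = x) ∧ (∃ z : A → ℝ, Q *ᵥ z = x)) ↔
        ∃ c : ℝ, x = fun _ => c)
    (U : Matrix A A ℝ)
    (hU : U = (2 • P - 1) * (2 • Q - 1)) :
    U ^ 2 = 1 ↔ P * Q = ((Fintype.card A : ℝ))⁻¹ • (Matrix.of fun _ _ => 1) := by
  have : IsAddTorsionFree (Matrix A A ℝ) := .of_module_rat _
  rw [hU, mul_sq_eq_one_iff_commute
    (IsIdempotentElem.two_nsmul_sub_one_mul_self hPidem)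
    (IsIdempotentElem.two_nsmul_sub_one_mul_self hQidem), commute_two_nsmul_sub_one_iff]
  constructor
  · intro hPQ
    apply eq_inv_card_smul_of_forall_mulVec_const
    · rw [transpose_mul, hPsymm, hQsymm, hPQ.eq]
    · exact fun v => (hinter _).mp
        ⟨⟨Q *ᵥ v, by rw [mulVec_mulVec]⟩, ⟨P *ᵥ v, by rw [mulVec_mulVec, hPQ.eq]⟩⟩
    · obtain ⟨hP1, hQ1⟩ := (hinter fun _ => 1).mpr ⟨1, rfl⟩
      rw [← mulVec_mulVec, mulVec_eq_self_of_exists_mulVec_eq hQidem hQ1,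
        mulVec_eq_self_of_exists_mulVec_eq hPidem hP1]
  · intro hPQ
    have hsymm : (P * Q)ᵀ = P * Q := by
      rw [hPQ]
      ext
      simp
    rw [transpose_mul, hPsymm, hQsymm] at hsymm
    exact hsymm.symm

theorem stmt_15 (A : Type*) [Fintype A] [DecidableEq A] [Nonempty A]
    (P Q : Matrix A A ℝ)
    (hPsymm : Pᵀ = P) (hPidem : P * P = P)
    (hQsymm : Qᵀ = Q) (hQidem : Q * Q = Q)
    (hinter : ∀ x : A → ℝ,
      ((∃ y : A → ℝ, P *ᵥ y = x) ∧ (∃ z : A → ℝ, Q *ᵥ z = x)) ↔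
        ∃ c : ℝ, x = fun _ => c)
    (U : Matrix A A ℝ)
    (hU : U = (2 • P - 1) * (2 • Q - 1)) :
    U ^ 2 = 1 ↔ P * Q = ((Fintype.card A : ℝ))⁻¹ • (Matrix.of fun _ _ => 1) :=
  stmt_15_general A P Q hPsymm hPidem hQsymm hQidem hinter U hU
end

section
/- For every integer t ≥ 0, T_t((P_m + P_mᵀ)/2) = (P_m^t + (P_mᵀ)^t)/2. In particular, T_m((P_m + P_mᵀ)/2) = I_m (the toroidal (1,m)-grid is periodic at time m), and if m = 2ℓ then T_ℓ((P_m + P_mᵀ)/2) = P_m^ℓ, whose (i, i+ℓ)-entries equal 1 (perfect state transfer from vertex (0,i) to vertex (0,i+ℓ) at time ℓ). -/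
open Matrix Polynomial

/-!
`P` is the permutation matrix of `i ↦ i + 1` on `Fin m`, so `Pᵀ = P⁻¹` and `P ^ m = 1`.
For mutually inverse `u, v` in any ring, induction on the recurrence gives the Vieta–Lucas
identity `C_n(u + v) = uⁿ + vⁿ`, and `T_n(x) = C_n(2x) / 2` turns it into
`T_n((u + v) / 2) = (uⁿ + vⁿ) / 2`. When `m = 2ℓ`, `P ^ ℓ` is its own inverse, so `Pᵀ ^ ℓ = P ^ ℓ`.
-/

section Chebyshev

variable {R A : Type*} [CommRing R] [Ring A] [Algebra R A] {u v : A}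

theorem aeval_chebyshev_C_add (huv : u * v = 1) (hvu : v * u = 1) (n : ℕ) :
    aeval (u + v) (Chebyshev.C R n) = u ^ n + v ^ n := by
  induction n using Nat.twoStepInduction with
  | zero => simp [one_add_one_eq_two, map_ofNat]
  | one => simp
  | more n ih₀ ih₁ =>
    have hu : u * v ^ (n + 1) = v ^ n := by rw [pow_succ', ← mul_assoc, huv, one_mul]
    have hv : v * u ^ (n + 1) = u ^ n := by rw [pow_succ', ← mul_assoc, hvu, one_mul]
    push_cast at ih₁ ⊢
    rw [Chebyshev.C_add_two, map_sub, map_mul, aeval_X, ih₀, ih₁, add_mul, mul_add, mul_add, hu, hv,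
      ← pow_succ', ← pow_succ']
    abel

theorem aeval_chebyshev_T_invOf_two_smul_add [Invertible (2 : R)] (huv : u * v = 1)
    (hvu : v * u = 1) (n : ℕ) :
    aeval ((⅟2 : R) • (u + v)) (Chebyshev.T R n) = ⅟(2 : R) • (u ^ n + v ^ n) := by
  have h2 : (2 : A) * (⅟(2 : R) • (u + v)) = u + v := by
    rw [mul_smul_comm, two_mul, ← two_smul R, smul_smul, invOf_mul_self, one_smul]
  rw [Chebyshev.T_eq_half_mul_C_comp_two_mul_X, map_mul, aeval_C, aeval_comp, map_mul, aeval_X,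
    map_ofNat, h2, aeval_chebyshev_C_add huv hvu, Algebra.smul_def]

end Chebyshev

section PermMatrix

variable {n R : Type*} [DecidableEq n]

theorem Equiv.Perm.permMatrix_apply_self [Zero R] [One R] (σ : Equiv.Perm n) (i : n) :
    σ.permMatrix R i (σ i) = 1 := by
  simp [PEquiv.toMatrix_apply]

variable [Fintype n]

theorem Equiv.Perm.permMatrix_pow [Semiring R] (σ : Equiv.Perm n) (t : ℕ) :
    (σ ^ t).permMatrix R = σ.permMatrix R ^ t := by
  induction t with
  | zero => simp
  | succ t ih => rw [pow_succ, Matrix.permMatrix_mul, ih, pow_succ']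

theorem Equiv.Perm.permMatrix_mul_transpose [NonAssocSemiring R] (σ : Equiv.Perm n) :
    σ.permMatrix R * (σ.permMatrix R)ᵀ = 1 := by
  rw [Matrix.transpose_permMatrix, ← Matrix.permMatrix_mul, inv_mul_cancel, Matrix.permMatrix_one]

theorem Equiv.Perm.transpose_mul_permMatrix [NonAssocSemiring R] (σ : Equiv.Perm n) :
    (σ.permMatrix R)ᵀ * σ.permMatrix R = 1 := by
  rw [Matrix.transpose_permMatrix, ← Matrix.permMatrix_mul, mul_inv_cancel, Matrix.permMatrix_one]

theorem Matrix.eq_permMatrix_of_mulVec_single [CommRing R] {σ : Equiv.Perm n} {P : Matrix n n R}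
    (h : ∀ i, P *ᵥ Pi.single i 1 = Pi.single (σ.symm i) 1) : P = σ.permMatrix R := by
  refine ext_of_mulVec_single fun i => ?_
  rw [h, permMatrix_mulVec]
  ext j
  simp [Pi.single_apply, Equiv.eq_symm_apply]

end PermMatrix

open Fin.NatCast in
theorem stmt_18 (m : ℕ) [NeZero m]
    (P : Matrix (Fin m) (Fin m) ℝ)
    (hP : ∀ i : Fin m, P *ᵥ Pi.single i 1 = Pi.single (i - 1) 1) :
    (∀ t : ℕ,
      Polynomial.aeval ((1 / 2 : ℝ) • (P + Pᵀ)) (Polynomial.Chebyshev.T ℝ t)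
        = (1 / 2 : ℝ) • (P ^ t + Pᵀ ^ t)) ∧
    (Polynomial.aeval ((1 / 2 : ℝ) • (P + Pᵀ)) (Polynomial.Chebyshev.T ℝ m) = 1) ∧
    (∀ ℓ : ℕ, m = 2 * ℓ →
      Polynomial.aeval ((1 / 2 : ℝ) • (P + Pᵀ)) (Polynomial.Chebyshev.T ℝ ℓ) = P ^ ℓ ∧
      ∀ i : Fin m, (P ^ ℓ) i (i + (ℓ : Fin m)) = 1) := by
  have hP_eq : P = (Equiv.addRight (1 : Fin m)).permMatrix ℝ :=
    eq_permMatrix_of_mulVec_single fun i => by simpa [sub_eq_add_neg] using hP i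
  have hPow : ∀ t : ℕ, P ^ t = (Equiv.addRight (t : Fin m)).permMatrix ℝ := fun t => by
    rw [hP_eq, ← Equiv.Perm.permMatrix_pow, Equiv.nsmul_addRight, nsmul_one]
  have hPm : P ^ m = 1 := by simp [hPow]
  have hT : ∀ t : ℕ, aeval ((1 / 2 : ℝ) • (P + Pᵀ)) (Chebyshev.T ℝ t)
      = (1 / 2 : ℝ) • (P ^ t + Pᵀ ^ t) := by
    have half : (1 / 2 : ℝ) = ⅟2 := by simp
    rw [half, hP_eq]
    exact aeval_chebyshev_T_invOf_two_smul_add (Equiv.Perm.permMatrix_mul_transpose _)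
      (Equiv.Perm.transpose_mul_permMatrix _)
  refine ⟨hT, ?_, fun ℓ hℓ => ⟨?_, fun i => ?_⟩⟩
  · rw [hT, ← transpose_pow, hPm, transpose_one, ← two_smul ℝ, smul_smul]
    norm_num
  · have hPℓ : P ^ ℓ * P ^ ℓ = 1 := by rw [← pow_add, ← two_mul, ← hℓ, hPm]
    have hPTℓ : Pᵀ ^ ℓ * P ^ ℓ = 1 := by
      rw [← transpose_pow, hPow]
      exact Equiv.Perm.transpose_mul_permMatrix _
    rw [hT, left_inv_eq_right_inv hPTℓ hPℓ, ← two_smul ℝ, smul_smul]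
    norm_num
  · rw [hPow]
    exact Equiv.Perm.permMatrix_apply_self _ i
end

section
/- For every integer t ≥ 0, T_t((1/4)·J₂ ⊗ (P_m + P_mᵀ + 2·I_m) − I_{2m}) = (1/4)·J₂ ⊗ (P_m^t + (P_mᵀ)^t − 2·(−1)^t·I_m) + (−1)^t·I_{2m}. In particular, if m is even then the value at t = m is I_{2m} (periodicity of the toroidal (2,m)-grid at time m), and if m is odd then the value at t = m is J₂ ⊗ I_m − I_{2m} (perfect state transfer from vertex (0,i) to vertex (1,i) at time m, and periodicity at time 2m). -/
open Matrix Polynomial Kronecker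

/-!
The right-hand sides satisfy the three-term recurrence `f (t + 2) = 2 B₁ f (t + 1) - f t` of the
Chebyshev polynomials. Two facts make this work: `J₂ * J₂ = 2 • J₂`, so `X ↦ (1/4) • (J₂ ⊗ₖ X)` is
multiplicative up to a factor `1/2`; and since `Pᵀ = P⁻¹`, the sequence `S t = P ^ t + Pᵀ ^ t`
satisfies `S (t + 2) = (P + Pᵀ) S (t + 1) - S t`. The cyclic shift has `P ^ m = 1`, so at `t = m`
(and `t = 2m`) the formula collapses.
-/

theorem Polynomial.Chebyshev.aeval_T_eq_of_recurrence {R A : Type*} [CommRing R] [Ring A]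
    [Algebra R A] (b : A) (f : ℕ → A) (h0 : f 0 = 1) (h1 : f 1 = b)
    (hrec : ∀ t, f (t + 2) = 2 * b * f (t + 1) - f t) (t : ℕ) :
    aeval b (Chebyshev.T R t) = f t := by
  induction t using Nat.twoStepInduction with
  | zero => simp [h0]
  | one => simp [h1]
  | more t ih₀ ih₁ =>
    rw [hrec, ← ih₀, ← ih₁]
    push_cast
    simp [Chebyshev.T_add_two, mul_assoc, map_ofNat]

theorem pow_add_pow_add_two {A : Type*} [Ring A] {u v : A} (huv : u * v = 1) (hvu : v * u = 1)
    (t : ℕ) :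
    u ^ (t + 2) + v ^ (t + 2) = (u + v) * (u ^ (t + 1) + v ^ (t + 1)) - (u ^ t + v ^ t) := by
  have hu : u * v ^ (t + 1) = v ^ t := by rw [pow_succ', ← mul_assoc, huv, one_mul]
  have hv : v * u ^ (t + 1) = u ^ t := by rw [pow_succ', ← mul_assoc, hvu, one_mul]
  rw [add_mul, mul_add, mul_add, hu, hv, ← pow_succ', ← pow_succ']
  abel

theorem Equiv.addRight_pow {G : Type*} [AddGroup G] (a : G) (k : ℕ) :
    Equiv.addRight a ^ k = Equiv.addRight (k • a) := by
  induction k with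
  | zero => ext; simp
  | succ k ih => ext x; simp [pow_succ, ih, succ_nsmul', add_assoc]

namespace Matrix

section Permutation

variable {n R : Type*} [Fintype n] [DecidableEq n]

theorem eq_permMatrix_of_mulVec_single_s19 [CommRing R] {P : Matrix n n R} (σ : Equiv.Perm n)
    (h : ∀ i, P *ᵥ Pi.single i 1 = Pi.single (σ.symm i) 1) : P = σ.permMatrix R := by
  refine ext_of_mulVec_single fun i => ?_
  rw [h, permMatrix_mulVec]
  ext j
  simp [Pi.single_apply, Equiv.eq_symm_apply]

theorem permMatrix_mul_transpose [NonAssocSemiring R] (σ : Equiv.Perm n) :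
    σ.permMatrix R * (σ.permMatrix R)ᵀ = 1 := by
  rw [transpose_permMatrix, ← permMatrix_mul, inv_mul_cancel, permMatrix_one]

theorem permMatrix_pow [Semiring R] (σ : Equiv.Perm n) (k : ℕ) :
    (σ ^ k).permMatrix R = σ.permMatrix R ^ k := by
  induction k with
  | zero => simp
  | succ k ih => rw [pow_succ', permMatrix_mul, ih, pow_succ]

end Permutation

theorem kronecker_sub {l m n p α : Type*} [NonUnitalNonAssocRing α] (A : Matrix l m α)
    (B₁ B₂ : Matrix n p α) : A ⊗ₖ (B₁ - B₂) = A ⊗ₖ B₁ - A ⊗ₖ B₂ := by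
  ext; simp [mul_sub]

theorem kronecker_mul_kronecker_of_mul_self {ι n R : Type*} [Fintype ι] [Fintype n] [CommRing R]
    {J : Matrix ι ι R} {c : R} (hJ : J * J = c • J) (X Y : Matrix n n R) :
    (J ⊗ₖ X) * (J ⊗ₖ Y) = c • (J ⊗ₖ (X * Y)) := by
  rw [← mul_kronecker_mul, hJ, smul_kronecker]

end Matrix

theorem Polynomial.Chebyshev.aeval_T_kronecker_of_recurrence {ι n : Type*} [Fintype ι]
    [DecidableEq ι] [Fintype n] [DecidableEq n] {J : Matrix ι ι ℝ} (hJ : J * J = (2 : ℝ) • J)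
    {Q : Matrix n n ℝ} {S : ℕ → Matrix n n ℝ} (hS₀ : S 0 = 2 • 1) (hS₁ : S 1 = Q)
    (hS : ∀ t, S (t + 2) = Q * S (t + 1) - S t) (t : ℕ) :
    aeval ((1 / 4 : ℝ) • (J ⊗ₖ (Q + 2 • 1)) - 1) (Chebyshev.T ℝ t)
      = (1 / 4 : ℝ) • (J ⊗ₖ (S t - (2 * (-1 : ℝ) ^ t) • 1)) + (-1 : ℝ) ^ t • 1 := by
  apply Chebyshev.aeval_T_eq_of_recurrence
  case h0 =>
    have : S 0 - (2 * (-1 : ℝ) ^ 0) • 1 = 0 := by rw [hS₀]; module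
    rw [this, kronecker_zero]; simp
  case h1 =>
    have : S 1 - (2 * (-1 : ℝ) ^ 1) • 1 = Q + 2 • 1 := by rw [hS₁]; module
    rw [this]; module
  case hrec =>
    intro t
    -- splitting `2 * B` first keeps a bare matrix numeral `2` out of the normal form
    rw [hS t, two_mul (α := Matrix _ _ ℝ)]
    simp only [pow_succ, mul_assoc, mul_add, add_mul, mul_sub, sub_mul, smul_mul_assoc,
      mul_smul_comm, mul_one, one_mul, kronecker_mul_kronecker_of_mul_self hJ, kronecker_add,
      kronecker_sub, kronecker_smul]
    module

theorem stmt_19 (m : ℕ) [NeZero m]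
    (P : Matrix (Fin m) (Fin m) ℝ)
    (hP : ∀ i : Fin m, P *ᵥ Pi.single i 1 = Pi.single (i - 1) 1)
    (J₂ : Matrix (Fin 2) (Fin 2) ℝ) (hJ : J₂ = Matrix.of fun _ _ => 1)
    (B₁ : Matrix (Fin 2 × Fin m) (Fin 2 × Fin m) ℝ)
    (hB₁ : B₁ = (1 / 4 : ℝ) • (J₂ ⊗ₖ (P + Pᵀ + 2 • (1 : Matrix (Fin m) (Fin m) ℝ))) - 1) :
    (∀ t : ℕ,
      Polynomial.aeval B₁ (Polynomial.Chebyshev.T ℝ t)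
        = (1 / 4 : ℝ) • (J₂ ⊗ₖ (P ^ t + Pᵀ ^ t
            - (2 * (-1 : ℝ) ^ t) • (1 : Matrix (Fin m) (Fin m) ℝ)))
          + ((-1 : ℝ) ^ t) • 1) ∧
    (Even m → Polynomial.aeval B₁ (Polynomial.Chebyshev.T ℝ m) = 1) ∧
    (Odd m →
      Polynomial.aeval B₁ (Polynomial.Chebyshev.T ℝ m)
        = J₂ ⊗ₖ (1 : Matrix (Fin m) (Fin m) ℝ) - 1 ∧
      Polynomial.aeval B₁ (Polynomial.Chebyshev.T ℝ (2 * m)) = 1) := by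
  have hshift : P = (Equiv.addRight (1 : Fin m)).permMatrix ℝ :=
    eq_permMatrix_of_mulVec_single_s19 _ fun i => by simp [hP, sub_eq_add_neg]
  have hPPt : P * Pᵀ = 1 := hshift ▸ permMatrix_mul_transpose _
  have hPm : P ^ m = 1 := by
    have : m • (1 : Fin m) = 0 := by simpa using card_nsmul_eq_zero (x := (1 : Fin m))
    rw [hshift, ← permMatrix_pow, Equiv.addRight_pow, this, Equiv.addRight_zero, permMatrix_one]
  have hJJ : J₂ * J₂ = (2 : ℝ) • J₂ := by
    subst hJ; ext i j; simp [mul_apply]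
  have formula := fun t : ℕ => hB₁ ▸ Chebyshev.aeval_T_kronecker_of_recurrence hJJ
    (S := fun t => P ^ t + Pᵀ ^ t) (by simp [two_smul]) (by simp)
    (pow_add_pow_add_two hPPt (mul_eq_one_comm.mp hPPt)) t
  have periodic (k : ℕ) (hk : Even k) (hPk : P ^ k = 1) :
      Polynomial.aeval B₁ (Polynomial.Chebyshev.T ℝ k) = 1 := by
    have : (1 + 1 - (2 * 1 : ℝ) • 1 : Matrix (Fin m) (Fin m) ℝ) = 0 := by module
    rw [formula, ← transpose_pow, hPk, transpose_one, hk.neg_one_pow, this, kronecker_zero]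
    simp
  refine ⟨formula, fun hm => periodic m hm hPm, fun hm => ⟨?_, ?_⟩⟩
  · have : (1 + 1 - (2 * -1 : ℝ) • 1 : Matrix (Fin m) (Fin m) ℝ) = (4 : ℝ) • 1 := by module
    rw [formula, ← transpose_pow, hPm, transpose_one, hm.neg_one_pow, this, kronecker_smul,
      smul_smul]
    module
  · exact_mod_cast periodic (2 * m) (even_two_mul m) (by rw [pow_mul', hPm, one_pow])
end
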